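/- arXiv:1807.00163 — 6 statements merged into one kernel-verified Lean document; each statement's English description precedes it below -/
import Mathlib

section
/- Let A ∈ ℝ^{m×n}, let B ∈ ℝ^{m×n} have nonnegative entries, and let I ⊆ {1,…,m}. Suppose α ∈ ℝ^m satisfies α_i > 0 for every i ∈ I; for each i ∈ I suppose v_i ∈ ℝ^n satisfies v_i ≥ 0 and B v_i ≥ e_i componentwise (where e_i is the i-th standard unit vector of ℝ^m); and suppose x_S ∈ ℝ^n and y_S ∈ ℝ^n satisfy y_S ≥ 0 and A x_S + B y_S ≥ Σ_{i ∉ I} e_i + Σ_{i ∈ I} max(1 − α_i, 0) · e_i componentwise. Then the pair consisting of first-stage decision x = x_S and second-stage decision y(h) = Σ_{i ∈ I} α_i h_i v_i + y_S satisfies, for every h ∈ [0,1]^m: y(h) ≥ 0 componentwise and A x + B y(h) ≥ h componentwise. -/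
open Matrix

/-- Feasibility of the constructed affine solution: covering a fraction of the inexpensive
components `i ∈ I` with the linear part `Σ_{i∈I} α_i h_i v_i` and the remaining requirement
with the static solution `(x_S, y_S)` yields a solution that is nonnegative and covers every
demand `h ∈ [0,1]^m`. -/
theorem affine_solution_feasible
    (m n : ℕ) (A B : Matrix (Fin m) (Fin n) ℝ) (hB : ∀ i j, 0 ≤ B i j)
    (I : Finset (Fin m)) (α : Fin m → ℝ) (hα : ∀ i ∈ I, 0 < α i)
    (v : Fin m → Fin n → ℝ)
    (hv0 : ∀ i ∈ I, ∀ j, 0 ≤ v i j)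
    (hvcov : ∀ i ∈ I, ∀ k, (Pi.single i (1 : ℝ) : Fin m → ℝ) k ≤ B.mulVec (v i) k)
    (xS yS : Fin n → ℝ) (hyS : ∀ j, 0 ≤ yS j)
    (hSta : ∀ k, ((if k ∈ I then max (1 - α k) 0 else 1) : ℝ) ≤
      A.mulVec xS k + B.mulVec yS k) :
    ∀ h : Fin m → ℝ, (∀ i, 0 ≤ h i ∧ h i ≤ 1) →
      (∀ j, 0 ≤ (∑ i ∈ I, (α i * h i) • v i) j + yS j) ∧
      (∀ k, h k ≤
        A.mulVec xS k + B.mulVec (fun j => (∑ i ∈ I, (α i * h i) • v i) j + yS j) k) := by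
  intro h hh
  have hcoef : ∀ i ∈ I, 0 ≤ α i * h i := fun i hi =>
    mul_nonneg (hα i hi).le (hh i).1
  constructor
  · intro j
    have : 0 ≤ (∑ i ∈ I, (α i * h i) • v i) j := by
      rw [Finset.sum_apply]
      exact Finset.sum_nonneg fun i hi =>
        mul_nonneg (hcoef i hi) (hv0 i hi j)
    linarith [hyS j]
  · intro k
    have hsplit : B.mulVec (fun j => (∑ i ∈ I, (α i * h i) • v i) j + yS j) k
        = (∑ i ∈ I, (α i * h i) * B.mulVec (v i) k) + B.mulVec yS k := by
      simp only [mulVec, dotProduct, Finset.sum_apply, Pi.smul_apply, smul_eq_mul,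
        mul_add, Finset.sum_add_distrib, Finset.mul_sum]
      congr 1
      rw [Finset.sum_comm]
      exact Finset.sum_congr rfl fun i _ => Finset.sum_congr rfl fun j _ => by ring
    rw [hsplit]
    have hterm : ∀ i ∈ I, i ≠ k → 0 ≤ (α i * h i) * B.mulVec (v i) k := by
      intro i hi hik
      have := hvcov i hi k
      rw [Pi.single_apply, if_neg (Ne.symm hik)] at this
      exact mul_nonneg (hcoef i hi) this
    by_cases hk : k ∈ I
    · have hsum : α k * h k * B.mulVec (v k) k + (∑ i ∈ I.erase k, (α i * h i) * B.mulVec (v i) k)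
          = ∑ i ∈ I, (α i * h i) * B.mulVec (v i) k := (Finset.add_sum_erase I (fun i => α i * h i * B.mulVec (v i) k) hk)
      have h1 : (1:ℝ) ≤ B.mulVec (v k) k := by
        have := hvcov k hk k; rwa [Pi.single_eq_same] at this
      have h2 : 0 ≤ ∑ i ∈ I.erase k, (α i * h i) * B.mulVec (v i) k :=
        Finset.sum_nonneg fun i hi =>
          hterm i (Finset.mem_of_mem_erase hi) (Finset.ne_of_mem_erase hi)
      have h3 : α k * h k ≤ α k * h k * B.mulVec (v k) k :=
        le_mul_of_one_le_right (hcoef k hk) h1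
      have h4 := hSta k
      rw [if_pos hk] at h4
      have h5 : (1 - α k) * h k ≤ max (1 - α k) 0 := by
        rcases le_or_gt 0 (1 - α k) with h6 | h6
        · calc (1 - α k) * h k ≤ (1 - α k) * 1 := by
                exact mul_le_mul_of_nonneg_left (hh k).2 h6
            _ ≤ max (1 - α k) 0 := by simp [le_max_iff]
        · have : (1 - α k) * h k ≤ 0 := mul_nonpos_of_nonpos_of_nonneg h6.le (hh k).1
          exact this.trans (le_max_right _ _)
      nlinarith [hsum]
    · have h4 := hSta k
      rw [if_neg hk] at h4
      have h2 : 0 ≤ ∑ i ∈ I, (α i * h i) * B.mulVec (v i) k :=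
        Finset.sum_nonneg fun i hi => hterm i hi (by rintro rfl; exact hk hi)
      linarith [(hh k).2]
end

section
/- Let J be a finite index set, let w_i ∈ (0,1] for i ∈ J, and let z* ∈ ℝ^J with z* ≥ 0 satisfy Σ_{i ∈ J} w_i z*_i > 1. Let ξ_i, i ∈ J, be independent Bernoulli random variables with ℙ(ξ_i = 1) = z*_i − ⌊z*_i⌋, and set Z_i = ⌊z*_i⌋ + ξ_i. Then ℙ( Σ_{i ∈ J} w_i Z_i > 1/2 ) ≥ 1 − e^{−1/8}. -/
open MeasureTheory ProbabilityTheory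

/-- The rounded dual solution retains at least half of its value with constant probability:
if `Σ w_i z*_i > 1` then `Σ w_i Z_i > 1/2` with probability at least `1 − e^{−1/8}`. -/
theorem rounded_dual_value_whp
    (J : Type) [Fintype J]
    (w : J → ℝ) (hw : ∀ i, 0 < w i ∧ w i ≤ 1)
    (zstar : J → ℝ) (hz0 : ∀ i, 0 ≤ zstar i)
    (hz1 : 1 < ∑ i, w i * zstar i)
    (Ω : Type) [MeasurableSpace Ω] (μ : Measure Ω) [IsProbabilityMeasure μ]
    (ξ : J → Ω → ℝ) (hmeas : ∀ i, Measurable (ξ i))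
    (h01 : ∀ i ω, ξ i ω = 0 ∨ ξ i ω = 1)
    (hber : ∀ i, μ {ω | ξ i ω = 1} = ENNReal.ofReal (zstar i - (⌊zstar i⌋ : ℝ)))
    (hindep : iIndepFun ξ μ) :
    ENNReal.ofReal (1 - Real.exp (-(1 / 8))) ≤
      μ {ω | 1 / 2 < ∑ i, w i * ((⌊zstar i⌋ : ℝ) + ξ i ω)} := by
  classical
  set f : J → ℝ := fun i => zstar i - (⌊zstar i⌋ : ℝ) with hf
  have hf0 : ∀ i, 0 ≤ f i := fun i => sub_nonneg.2 (Int.floor_le _)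
  set Y : J → Ω → ℝ := fun i => fun ω => w i * ξ i ω with hYdef
  set X : Ω → ℝ := fun ω => ∑ i, Y i ω with hXdef
  set D : ℝ := ∑ i, w i * (⌊zstar i⌋ : ℝ) with hDdef
  set F : ℝ := ∑ i, w i * f i with hFdef
  set t : ℝ := -Real.log 2 with htdef
  have ht0 : t ≤ 0 := neg_nonpos.2 (Real.log_nonneg one_le_two)
  have hDF : 1 < D + F := by
    rw [hDdef, hFdef, ← Finset.sum_add_distrib]
    have : ∀ i, w i * (⌊zstar i⌋ : ℝ) + w i * f i = w i * zstar i := by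
      intro i; simp only [hf]; ring
    calc (1:ℝ) < ∑ i, w i * zstar i := hz1
      _ = _ := by rw [Finset.sum_congr rfl fun i _ => (this i).symm]
  have hD0 : 0 ≤ D := Finset.sum_nonneg fun i _ => mul_nonneg (hw i).1.le
    (by exact_mod_cast Int.floor_nonneg.2 (hz0 i))
  have hXmeas : Measurable X := by
    apply Finset.measurable_sum
    intro i _
    exact (hmeas i).const_mul (w i)
  have hYmeas : ∀ i, Measurable (Y i) := fun i => (hmeas i).const_mul (w i)
  have hξ01 : ∀ i ω, 0 ≤ ξ i ω ∧ ξ i ω ≤ 1 := by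
    intro i ω; rcases h01 i ω with h | h <;> simp [h]
  have hX0 : ∀ ω, 0 ≤ X ω := fun ω =>
    Finset.sum_nonneg fun i _ => mul_nonneg (hw i).1.le (hξ01 i ω).1
  -- integrability of ξ i
  have hint_ξ : ∀ i, Integrable (ξ i) μ := by
    intro i
    refine Integrable.mono' (integrable_const 1) (hmeas i).aestronglyMeasurable
      (Filter.Eventually.of_forall fun ω => ?_)
    rcases h01 i ω with h | h <;> simp [h]
  -- expectation of ξ i
  have hEξ : ∀ i, ∫ ω, ξ i ω ∂μ = f i := by
    intro i
    have hset : MeasurableSet {ω | ξ i ω = 1} := (hmeas i) (measurableSet_singleton 1)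
    have hind : (fun ω => ξ i ω) = fun ω =>
        Set.indicator {ω | ξ i ω = 1} (fun _ => (1 : ℝ)) ω := by
      funext ω
      rcases h01 i ω with h | h <;>
        simp [Set.indicator_apply, Set.mem_setOf_eq, h]
    rw [hind, integral_indicator_const (1 : ℝ) hset, measureReal_def, hber i, smul_eq_mul, mul_one,
      ENNReal.toReal_ofReal (hf0 i)]
  -- mgf of each Y i at t
  have hmgfY : ∀ i, mgf (Y i) μ t = 1 + (Real.exp (t * w i) - 1) * f i := by
    intro i
    have hpt : ∀ ω, Real.exp (t * Y i ω) = 1 + (Real.exp (t * w i) - 1) * ξ i ω := by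
      intro ω
      rcases h01 i ω with h | h <;> simp [hYdef, h, mul_assoc]
    rw [mgf]
    simp_rw [hpt]
    rw [integral_add (integrable_const 1) ((hint_ξ i).const_mul _), integral_const,
      integral_const_mul, hEξ i]
    simp
  -- bound each mgf
  have hmgfY_le : ∀ i, mgf (Y i) μ t ≤ Real.exp (-(w i * f i) / 2) := by
    intro i
    rw [hmgfY i]
    have hconv : Real.exp ((1 - w i) • (0 : ℝ) + w i • (-Real.log 2)) ≤
        (1 - w i) • Real.exp 0 + w i • Real.exp (-Real.log 2) :=
      convexOn_exp.2 (Set.mem_univ 0) (Set.mem_univ (-Real.log 2))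
        (by linarith [(hw i).2]) (hw i).1.le (by ring)
    have hexp2 : Real.exp (-Real.log 2) = 1 / 2 := by
      rw [Real.exp_neg, Real.exp_log two_pos]; norm_num
    have hkey : Real.exp (t * w i) ≤ 1 - w i / 2 := by
      rw [hexp2] at hconv
      simp only [smul_eq_mul, mul_zero, zero_add, Real.exp_zero, mul_one] at hconv
      calc Real.exp (t * w i) = Real.exp (w i * -Real.log 2) := by rw [htdef]; ring_nf
        _ ≤ 1 - w i + w i * (1 / 2) := hconv
        _ = 1 - w i / 2 := by ring
    have h1 : (Real.exp (t * w i) - 1) * f i ≤ -(w i * f i) / 2 := by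
      have := mul_le_mul_of_nonneg_right (by linarith : Real.exp (t * w i) - 1 ≤ -(w i / 2))
        (hf0 i)
      nlinarith
    have h2 := Real.add_one_le_exp (-(w i * f i) / 2)
    linarith
  -- independence of the Y i
  have hindepY : iIndepFun Y μ :=
    hindep.comp (fun i x => w i * x) (fun i => measurable_id.const_mul (w i))
  have hXsum : X = ∑ i, Y i := by
    funext ω; simp [hXdef, Finset.sum_apply]
  -- integrability for Chernoff
  have h_int : Integrable (fun ω => Real.exp (t * X ω)) μ := by
    refine Integrable.mono' (integrable_const 1)
      ((hXmeas.const_mul t).exp).aestronglyMeasurable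
      (Filter.Eventually.of_forall fun ω => ?_)
    rw [Real.norm_eq_abs, abs_of_pos (Real.exp_pos _), ← Real.exp_zero]
    exact Real.exp_le_exp.2 (mul_nonpos_of_nonpos_of_nonneg ht0 (hX0 ω))
  -- Chernoff bound
  have hchern := measure_le_le_exp_mul_mgf (μ := μ) (X := X) (1 / 2 - D) ht0 h_int
  have hmgfX : mgf X μ t ≤ Real.exp (-F / 2) := by
    rw [hXsum, iIndepFun.mgf_sum hindepY hYmeas]
    calc ∏ i, mgf (Y i) μ t ≤ ∏ i, Real.exp (-(w i * f i) / 2) :=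
          Finset.prod_le_prod (fun i _ => mgf_nonneg) (fun i _ => hmgfY_le i)
      _ = Real.exp (∑ i, -(w i * f i) / 2) := by rw [Real.exp_sum]
      _ = Real.exp (-F / 2) := by
          congr 1
          rw [hFdef, ← Finset.sum_div, ← Finset.sum_neg_distrib]
  have hnum : Real.exp (-t * (1 / 2 - D)) * Real.exp (-F / 2) ≤ Real.exp (-(1 / 8)) := by
    rw [← Real.exp_add, Real.exp_le_exp, htdef]
    have hl1 : Real.log 2 < 0.6931471808 := Real.log_two_lt_d9
    have hl2 : (0.6931471803 : ℝ) < Real.log 2 := Real.log_two_gt_d9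
    nlinarith [hDF, hD0]
  have hbound : (μ {ω | X ω ≤ 1 / 2 - D}).toReal ≤ Real.exp (-(1 / 8)) := by
    calc (μ {ω | X ω ≤ 1 / 2 - D}).toReal
        ≤ Real.exp (-t * (1 / 2 - D)) * mgf X μ t := hchern
      _ ≤ Real.exp (-t * (1 / 2 - D)) * Real.exp (-F / 2) := by
          exact mul_le_mul_of_nonneg_left hmgfX (Real.exp_pos _).le
      _ ≤ Real.exp (-(1 / 8)) := hnum
  -- translate the target set
  have hSmeas : Measurable fun ω => ∑ i, w i * ((⌊zstar i⌋ : ℝ) + ξ i ω) := by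
    apply Finset.measurable_sum
    intro i _
    exact (measurable_const.add (hmeas i)).const_mul (w i)
  have hSX : ∀ ω, ∑ i, w i * ((⌊zstar i⌋ : ℝ) + ξ i ω) = D + X ω := by
    intro ω
    rw [hDdef, hXdef, ← Finset.sum_add_distrib]
    exact Finset.sum_congr rfl fun i _ => by simp [hYdef]; ring
  have hsetc : {ω | 1 / 2 < ∑ i, w i * ((⌊zstar i⌋ : ℝ) + ξ i ω)} =
      {ω | X ω ≤ 1 / 2 - D}ᶜ := by
    ext ω
    simp only [Set.mem_setOf_eq, Set.mem_compl_iff, not_le, hSX ω]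
    constructor <;> intro h <;> linarith
  have hBm : MeasurableSet {ω | X ω ≤ 1 / 2 - D} := hXmeas measurableSet_Iic
  have hμB : μ {ω | X ω ≤ 1 / 2 - D} ≤ ENNReal.ofReal (Real.exp (-(1 / 8))) := by
    rw [← ENNReal.ofReal_toReal (measure_ne_top μ _)]
    exact ENNReal.ofReal_le_ofReal hbound
  rw [hsetc, prob_compl_eq_one_sub hBm]
  have h1 : ENNReal.ofReal (1 - Real.exp (-(1 / 8))) =
      1 - ENNReal.ofReal (Real.exp (-(1 / 8))) := by
    rw [ENNReal.ofReal_sub _ (Real.exp_pos _).le, ENNReal.ofReal_one]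
  rw [h1]
  exact tsub_le_tsub_left hμB 1
end

section
/- Let m ≥ 1, let U ⊆ [0,1]^m, and let γ ∈ [0,1] satisfy γ m ≥ 1, γ·(1,…,1) ∈ U, and Σ_{i=1}^m h_i ≤ γ m for every h ∈ U. Let ξ_1, …, ξ_m be independent Bernoulli random variables each with parameter γ. Then ℙ( for every h ∈ U, Σ_{i=1}^m h_i ≤ 2 Σ_{i=1}^m ξ_i ) ≥ 1 − e^{−1/8}; equivalently, with Ṽ = { h ∈ [0,1]^m : Σ_{i=1}^m h_i ≤ Σ_{i=1}^m ξ_i }, the event { U ⊆ 2Ṽ } has probability at least 1 − e^{−1/8}, where 2Ṽ = { 2v : v ∈ Ṽ }. -/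
open MeasureTheory ProbabilityTheory

/-- With probability at least `1 − e^{−1/8}`, the random budget `Σ ξ_i` dominates half the
maximal total demand of `U`, i.e. `U ⊆ 2Ṽ` where `Ṽ = {h ∈ [0,1]^m : Σ h_i ≤ Σ ξ_i}`. -/
theorem random_budget_dominates
    (m : ℕ) (hm : 1 ≤ m)
    (U : Set (Fin m → ℝ)) (hU : ∀ h ∈ U, ∀ i, 0 ≤ h i ∧ h i ≤ 1)
    (γ : ℝ) (hγ0 : 0 ≤ γ) (hγ1 : γ ≤ 1) (hγm : 1 ≤ γ * m)
    (hγU : (fun _ : Fin m => γ) ∈ U)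
    (hmax : ∀ h ∈ U, ∑ i, h i ≤ γ * m)
    (Ω : Type) [MeasurableSpace Ω] (μ : Measure Ω) [IsProbabilityMeasure μ]
    (ξ : Fin m → Ω → ℝ) (hmeas : ∀ i, Measurable (ξ i))
    (h01 : ∀ i ω, ξ i ω = 0 ∨ ξ i ω = 1)
    (hber : ∀ i, μ {ω | ξ i ω = 1} = ENNReal.ofReal γ)
    (hindep : iIndepFun ξ μ) :
    ENNReal.ofReal (1 - Real.exp (-(1 / 8))) ≤
      μ {ω | ∀ h ∈ U, ∑ i, h i ≤ 2 * ∑ i, ξ i ω} := by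
  classical
  set t : ℝ := -Real.log 2 with ht_def
  have ht : t ≤ 0 := neg_nonpos.mpr (Real.log_nonneg one_le_two)
  -- integrability of ξ i
  have hξint : ∀ i, Integrable (ξ i) μ := by
    intro i
    refine (integrable_const (1 : ℝ)).mono' (hmeas i).aestronglyMeasurable ?_
    refine ae_of_all _ fun ω => ?_
    rcases h01 i ω with h | h <;> simp [h]
  have hξexp : ∀ i, Integrable (fun ω => Real.exp (t * ξ i ω)) μ := by
    intro i
    refine (integrable_const (Real.exp |t|)).mono'
      ((hmeas i).const_mul t).exp.aestronglyMeasurable ?_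
    refine ae_of_all _ fun ω => ?_
    rw [Real.norm_eq_abs, Real.abs_exp, Real.exp_le_exp]
    rcases h01 i ω with h | h <;> simp [h, abs_nonneg, le_abs_self]
  -- mean of ξ i
  have hint : ∀ i, ∫ ω, ξ i ω ∂μ = γ := by
    intro i
    have hs : MeasurableSet {ω | ξ i ω = 1} := (hmeas i) (measurableSet_singleton 1)
    have heq : ξ i = Set.indicator {ω | ξ i ω = 1} (fun _ => (1 : ℝ)) := by
      funext ω
      rcases h01 i ω with h | h <;> simp [Set.indicator_apply, h]
    rw [heq, integral_indicator_const _ hs, measureReal_def, hber i, smul_eq_mul, mul_one,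
      ENNReal.toReal_ofReal hγ0]
  -- mgf of each ξ i
  have hmgf : ∀ i, mgf (ξ i) μ t = 1 - γ / 2 := by
    intro i
    have hexp_t : Real.exp t = 1 / 2 := by
      rw [ht_def, Real.exp_neg, Real.exp_log two_pos]; norm_num
    have heq : (fun ω => Real.exp (t * ξ i ω))
        = fun ω => 1 + (Real.exp t - 1) * ξ i ω := by
      funext ω
      rcases h01 i ω with h | h <;> simp [h] <;> ring
    have : mgf (ξ i) μ t = ∫ ω, (1 + (Real.exp t - 1) * ξ i ω) ∂μ := by
      rw [mgf, heq]
    rw [this, integral_add (integrable_const _) ((hξint i).const_mul _),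
      integral_const, integral_const_mul, hint i]
    simp [hexp_t]
    ring
  -- Chernoff bound
  have hintsum : Integrable (fun ω => Real.exp (t * (∑ i, ξ i) ω)) μ :=
    hindep.integrable_exp_mul_sum hmeas (fun i _ => hξexp i)
  have hch := measure_le_le_exp_mul_mgf (X := ∑ i, ξ i) (μ := μ) (ε := γ * m / 2) ht hintsum
  have hmgfsum : mgf (∑ i, ξ i) μ t = (1 - γ / 2) ^ m := by
    rw [hindep.mgf_sum hmeas Finset.univ]
    simp [hmgf]
  -- numeric bound on the RHS
  have hγ2 : (0 : ℝ) ≤ 1 - γ / 2 := by linarith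
  have h1 : (1 - γ / 2 : ℝ) ≤ Real.exp (-(γ / 2)) := by
    have := Real.add_one_le_exp (-(γ / 2)); linarith
  have h2 : ((1 - γ / 2) : ℝ) ^ m ≤ Real.exp (-(γ / 2)) ^ m :=
    pow_le_pow_left₀ hγ2 h1 m
  have h3 : Real.exp (-(γ / 2)) ^ m = Real.exp ((m : ℝ) * -(γ / 2)) :=
    (Real.exp_nat_mul _ m).symm
  have hnum : Real.exp (-t * (γ * m / 2)) * mgf (∑ i, ξ i) μ t ≤ Real.exp (-(1 / 8)) := by
    rw [hmgfsum]
    calc Real.exp (-t * (γ * m / 2)) * ((1 - γ / 2) : ℝ) ^ m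
        ≤ Real.exp (-t * (γ * m / 2)) * Real.exp ((m : ℝ) * -(γ / 2)) := by
          rw [← h3]; exact mul_le_mul_of_nonneg_left h2 (Real.exp_pos _).le
      _ = Real.exp (-t * (γ * m / 2) + (m : ℝ) * -(γ / 2)) := (Real.exp_add _ _).symm
      _ ≤ Real.exp (-(1 / 8)) := by
          rw [Real.exp_le_exp, ht_def]
          have hlog : Real.log 2 < 0.6931471808 := Real.log_two_lt_d9
          have hmono : (1 : ℝ) * (1 - Real.log 2) ≤ (γ * m) * (1 - Real.log 2) :=
            mul_le_mul_of_nonneg_right hγm (by linarith)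
          nlinarith
  have hP : (μ {ω | (∑ i, ξ i) ω ≤ γ * m / 2}).toReal ≤ Real.exp (-(1 / 8)) :=
    hch.trans hnum
  -- set up sets
  set A : Set Ω := {ω | (∑ i, ξ i) ω ≤ γ * m / 2} with hA_def
  have hAmeas : MeasurableSet A := by
    have : Measurable (∑ i, ξ i) := by
      have h := Finset.measurable_sum Finset.univ (fun i (_ : i ∈ Finset.univ) => hmeas i)
      have heq : (∑ i, ξ i) = fun a => ∑ i, ξ i a := by funext a; simp
      rw [heq]; exact h
    exact measurableSet_le this measurable_const
  have hAle : μ A ≤ ENNReal.ofReal (Real.exp (-(1 / 8))) := by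
    rw [← ENNReal.ofReal_toReal (measure_ne_top μ A)]
    exact ENNReal.ofReal_le_ofReal hP
  have hsubset : Aᶜ ⊆ {ω | ∀ h ∈ U, ∑ i, h i ≤ 2 * ∑ i, ξ i ω} := by
    intro ω hω h hh
    have hω' : γ * m / 2 < (∑ i, ξ i) ω := lt_of_not_ge hω
    have hsum : (∑ i, ξ i) ω = ∑ i, ξ i ω := by simp
    have := hmax h hh
    rw [hsum] at hω'
    linarith
  calc ENNReal.ofReal (1 - Real.exp (-(1 / 8)))
      = 1 - ENNReal.ofReal (Real.exp (-(1 / 8))) := by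
        rw [ENNReal.ofReal_sub _ (Real.exp_pos _).le, ENNReal.ofReal_one]
    _ ≤ 1 - μ A := tsub_le_tsub_left hAle _
    _ = μ Aᶜ := by
        rw [measure_compl hAmeas (measure_ne_top μ A), measure_univ]
    _ ≤ _ := measure_mono hsubset
end

section
/- Let m ≥ 1, L ≥ 2, let ν_1, …, ν_L ∈ [0,1]^m, and let U = { h ∈ [0,1]^m : ν_ℓ^T h ≤ 1 for every ℓ ∈ {1,…,L} }. Assume U is permutation invariant, i.e., for every h ∈ U and every permutation τ of {1,…,m}, (h_{τ(1)},…,h_{τ(m)}) ∈ U. Let γ ∈ [0,1] be such that γ·(1,…,1) ∈ U, and let ξ_1, …, ξ_m be independent Bernoulli random variables each with parameter γ; set Ṽ = { h ∈ [0,1]^m : Σ_{i=1}^m h_i ≤ Σ_{i=1}^m ξ_i }. Then ℙ( Ṽ ⊆ 4 log L · U ) ≥ 1 − 1/L, where 4 log L · U = { 4 (log L) u : u ∈ U }. -/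
open MeasureTheory ProbabilityTheory
open scoped Pointwise ENNReal

set_option linter.unusedSectionVars false
set_option maxHeartbeats 1000000

noncomputable section
namespace RBIS

open Real

/-- truncated falling-factorial product -/
def G (r : ℕ) (x : ℝ) : ℝ := ∏ j ∈ Finset.range r, max (x - j) 0

lemma G_nonneg (r : ℕ) (x : ℝ) : 0 ≤ G r x :=
  Finset.prod_nonneg fun _ _ => le_max_right _ _

lemma G_succ (r : ℕ) (x : ℝ) : G (r + 1) x = G r x * max (x - r) 0 := by
  rw [G, Finset.prod_range_succ]; rfl

lemma G_mono (r : ℕ) {x y : ℝ} (h : x ≤ y) : G r x ≤ G r y :=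
  Finset.prod_le_prod (fun j _ => le_max_right _ _)
    (fun j _ => max_le_max (by linarith) le_rfl)

lemma max_shift (x a : ℝ) (ha : 0 ≤ a) : max (x + a) 0 ≤ max x 0 + a :=
  max_le (add_le_add (le_max_left _ _) le_rfl)
    (add_nonneg (le_max_right _ _) ha)

lemma keyK : ∀ (r : ℕ) (s a : ℝ), 0 ≤ s → 0 ≤ a → a ≤ 1 →
    G (r + 1) (s + a) ≤ G (r + 1) s + (r + 1) * a * G r s := by
  intro r
  induction r with
  | zero =>
    intro s a hs ha0 ha1
    simp only [G, zero_add, Finset.prod_range_one, Finset.range_zero, Finset.prod_empty,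
      Nat.cast_zero, sub_zero]
    rw [max_eq_left hs, max_eq_left (by linarith)]
    norm_num
  | succ n ih =>
    intro s a hs ha0 ha1
    have hGn := G_nonneg n s
    have hGn1 := G_nonneg (n + 1) s
    have h1 : G (n + 1) (s + a) ≤ G (n + 1) s + (n + 1) * a * G n s := ih s a hs ha0 ha1
    have hM0 : (0:ℝ) ≤ max (s + a - ((n:ℝ) + 1)) 0 := le_max_right _ _
    have step1 : G (n + 2) (s + a) = G (n + 1) (s + a) * max (s + a - ((n:ℝ) + 1)) 0 := by
      rw [G_succ (n+1) (s+a)]; push_cast; ring_nf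
    have gs2 : G (n + 2) s = G (n + 1) s * max (s - ((n:ℝ) + 1)) 0 := by
      rw [G_succ (n+1) s]; push_cast; ring_nf
    have gs1 : G (n + 1) s = G n s * max (s - (n:ℝ)) 0 := G_succ n s
    have e1 : max (s + a - ((n:ℝ) + 1)) 0 ≤ max (s - ((n:ℝ)+1)) 0 + a := by
      have := max_shift (s - ((n:ℝ)+1)) a ha0
      calc max (s + a - ((n:ℝ) + 1)) 0 = max (s - ((n:ℝ)+1) + a) 0 := by ring_nf
        _ ≤ _ := this
    have e2 : max (s + a - ((n:ℝ) + 1)) 0 ≤ max (s - (n:ℝ)) 0 := by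
      apply max_le_max _ le_rfl; linarith
    have final : G (n + 2) (s + a) ≤ G (n + 2) s + ((n:ℝ) + 2) * a * G (n + 1) s := by
      calc G (n + 2) (s + a) = G (n + 1) (s + a) * max (s + a - ((n:ℝ) + 1)) 0 := step1
        _ ≤ (G (n + 1) s + (n + 1) * a * G n s) * max (s + a - ((n:ℝ) + 1)) 0 :=
            mul_le_mul_of_nonneg_right h1 hM0
        _ = G (n + 1) s * max (s + a - ((n:ℝ) + 1)) 0
            + ((n:ℝ) + 1) * a * (G n s * max (s + a - ((n:ℝ) + 1)) 0) := by ring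
        _ ≤ G (n + 1) s * (max (s - ((n:ℝ)+1)) 0 + a)
            + ((n:ℝ) + 1) * a * (G n s * max (s - (n:ℝ)) 0) := by
            apply add_le_add (mul_le_mul_of_nonneg_left e1 hGn1)
            apply mul_le_mul_of_nonneg_left (mul_le_mul_of_nonneg_left e2 hGn)
            positivity
        _ = G (n + 2) s + ((n:ℝ) + 2) * a * G (n + 1) s := by
            rw [← gs1, gs2]; ring
    calc G (n + 1 + 1) (s + a) = G (n + 2) (s + a) := by norm_num
      _ ≤ G (n + 2) s + ((n:ℝ) + 2) * a * G (n + 1) s := final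
      _ = G (n + 1 + 1) s + (↑(n + 1) + 1) * a * G (n + 1) s := by push_cast; ring_nf


variable {ι : Type*} [DecidableEq ι]

def esym (F : Finset ι) (w : ι → ℝ) (r : ℕ) : ℝ :=
  ∑ A ∈ F.powersetCard r, ∏ i ∈ A, w i

lemma esym_zero (F : Finset ι) (w : ι → ℝ) : esym F w 0 = 1 := by
  simp [esym]

lemma esym_insert {a : ι} {F : Finset ι} (ha : a ∉ F) (w : ι → ℝ) (r : ℕ) :
    esym (insert a F) w (r + 1) = esym F w (r + 1) + w a * esym F w r := by
  unfold esym
  rw [Finset.powersetCard_succ_insert ha, Finset.sum_union, Finset.sum_image]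
  · rw [Finset.mul_sum]
    congr 1
    apply Finset.sum_congr rfl
    intro A hA
    rw [Finset.mem_powersetCard] at hA
    have haA : a ∉ A := fun h => ha (hA.1 h)
    rw [Finset.prod_insert haA]
  · intro A hA B hB hAB
    rw [Finset.mem_coe, Finset.mem_powersetCard] at hA hB
    have haA : a ∉ A := fun h => ha (hA.1 h)
    have haB : a ∉ B := fun h => ha (hB.1 h)
    have := congrArg (fun S => Finset.erase S a) hAB
    simpa [Finset.erase_insert haA, Finset.erase_insert haB] using this
  · rw [Finset.disjoint_right]
    intro A hA hA'
    rw [Finset.mem_image] at hA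
    obtain ⟨B, hB, rfl⟩ := hA
    rw [Finset.mem_powersetCard] at hA'
    exact ha (hA'.1 (Finset.mem_insert_self a B))

lemma esym_nonneg (F : Finset ι) (w : ι → ℝ) (r : ℕ) (hw : ∀ i ∈ F, 0 ≤ w i) :
    0 ≤ esym F w r := by
  apply Finset.sum_nonneg
  intro A hA
  rw [Finset.mem_powersetCard] at hA
  exact Finset.prod_nonneg fun i hi => hw i (hA.1 hi)

lemma binom_two_terms : ∀ (n : ℕ) (s a : ℝ), 0 ≤ s → 0 ≤ a →
    s ^ (n + 1) + (n + 1) * a * s ^ n ≤ (s + a) ^ (n + 1) := by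
  intro n
  induction n with
  | zero => intro s a hs ha; simpa using by nlinarith
  | succ n ih =>
    intro s a hs ha
    have h1 := ih s a hs ha
    have hsa : (0:ℝ) ≤ s + a := by linarith
    have hsn : (0:ℝ) ≤ s ^ n := pow_nonneg hs n
    have expand : (s+a) * (s^(n+1) + ((n:ℝ)+1)*a*s^n)
        = s^(n+2) + ((n:ℝ)+1+1)*a*s^(n+1) + ((n:ℝ)+1)*a^2*s^n := by ring
    have hterm : (0:ℝ) ≤ ((n:ℝ)+1)*a^2*s^n := by positivity
    calc s ^ (n + 1 + 1) + (↑(n + 1) + 1) * a * s ^ (n + 1)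
        = s ^ (n + 2) + ((n:ℝ) + 1 + 1) * a * s ^ (n + 1) := by push_cast; ring
      _ ≤ (s + a) * (s ^ (n + 1) + ((n:ℝ) + 1) * a * s ^ n) := by
          rw [expand]; linarith
      _ ≤ (s + a) * (s + a) ^ (n + 1) := by
          apply mul_le_mul_of_nonneg_left h1 hsa
      _ = (s + a) ^ (n + 1 + 1) := by ring
  
/-- lower bound: Jensen-type -/
lemma esym_ge (F : Finset ι) (w : ι → ℝ) :
    ∀ r : ℕ, (∀ i ∈ F, 0 ≤ w i ∧ w i ≤ 1) →
    G r (∑ i ∈ F, w i) / (r.factorial : ℝ) ≤ esym F w r := by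
  induction F using Finset.induction_on with
  | empty =>
    intro r _
    cases r with
    | zero => simp [esym_zero, G]
    | succ k =>
      have h0 : G (k + 1) (∑ i ∈ (∅ : Finset ι), w i) = 0 := by
        simp [G, Finset.prod_range_succ']
      have h1 : Finset.powersetCard (k+1) (∅ : Finset ι) = ∅ := by
        rw [Finset.powersetCard_eq_empty]; simp
      rw [h0]
      simp [esym, h1]
  | @insert a F ha ih =>
    intro r hw
    have hwa := hw a (Finset.mem_insert_self a F)
    have hwF : ∀ i ∈ F, 0 ≤ w i ∧ w i ≤ 1 := fun i hi => hw i (Finset.mem_insert_of_mem hi)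
    have hs : 0 ≤ ∑ i ∈ F, w i := Finset.sum_nonneg fun i hi => (hwF i hi).1
    cases r with
    | zero => simp [esym_zero, G]
    | succ k =>
      rw [esym_insert ha, Finset.sum_insert ha]
      have h1 := ih (k + 1) hwF
      have h2 := ih k hwF
      have hK := keyK k (∑ i ∈ F, w i) (w a) hs hwa.1 hwa.2
      have hfac : (0:ℝ) < (k + 1).factorial := by positivity
      have hfaceq : ((k+1).factorial : ℝ) = (k + 1) * k.factorial := by
        rw [Nat.factorial_succ]; push_cast; ring
      calc G (k + 1) (w a + ∑ i ∈ F, w i) / ((k+1).factorial : ℝ)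
          = G (k + 1) (∑ i ∈ F, w i + w a) / ((k+1).factorial : ℝ) := by rw [add_comm (w a)]
        _ ≤ (G (k + 1) (∑ i ∈ F, w i) + (k + 1) * w a * G k (∑ i ∈ F, w i)) / ((k+1).factorial : ℝ) := by
            exact div_le_div_of_nonneg_right hK hfac.le
        _ = G (k + 1) (∑ i ∈ F, w i) / ((k+1).factorial : ℝ)
            + w a * (G k (∑ i ∈ F, w i) / (k.factorial : ℝ)) := by
            rw [hfaceq]; field_simp
        _ ≤ esym F w (k + 1) + w a * esym F w k := by
            apply add_le_add h1
            exact mul_le_mul_of_nonneg_left h2 hwa.1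

/-- Maclaurin-type upper bound -/
lemma esym_le (F : Finset ι) (w : ι → ℝ) :
    ∀ r : ℕ, (∀ i ∈ F, 0 ≤ w i) →
    esym F w r ≤ (∑ i ∈ F, w i) ^ r / (r.factorial : ℝ) := by
  induction F using Finset.induction_on with
  | empty =>
    intro r _
    cases r with
    | zero => simp [esym_zero]
    | succ k => simp [esym]; positivity
  | @insert a F ha ih =>
    intro r hw
    have hwa := hw a (Finset.mem_insert_self a F)
    have hwF : ∀ i ∈ F, 0 ≤ w i := fun i hi => hw i (Finset.mem_insert_of_mem hi)
    have hs : 0 ≤ ∑ i ∈ F, w i := Finset.sum_nonneg hwF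
    cases r with
    | zero => simp [esym_zero]
    | succ k =>
      rw [esym_insert ha, Finset.sum_insert ha]
      have h1 := ih (k + 1) hwF
      have h2 := ih k hwF
      have hfac : (0:ℝ) < (k + 1).factorial := by positivity
      have hfacK : (0:ℝ) < k.factorial := by positivity
      have hfaceq : ((k+1).factorial : ℝ) = (k + 1) * k.factorial := by
        rw [Nat.factorial_succ]; push_cast; ring
      have hbin := binom_two_terms k (∑ i ∈ F, w i) (w a) hs hwa
      calc esym F w (k+1) + w a * esym F w k
          ≤ (∑ i ∈ F, w i) ^ (k+1) / ((k+1).factorial : ℝ)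
            + w a * ((∑ i ∈ F, w i) ^ k / (k.factorial : ℝ)) := by
            apply add_le_add h1 (mul_le_mul_of_nonneg_left h2 hwa)
        _ = ((∑ i ∈ F, w i) ^ (k+1) + (k+1) * w a * (∑ i ∈ F, w i) ^ k) / ((k+1).factorial : ℝ) := by
            rw [hfaceq]; field_simp
        _ ≤ (∑ i ∈ F, w i + w a) ^ (k+1) / ((k+1).factorial : ℝ) := by
            exact div_le_div_of_nonneg_right hbin hfac.le
        _ = (w a + ∑ i ∈ F, w i) ^ (k+1) / ((k+1).factorial : ℝ) := by rw [add_comm (∑ i ∈ F, w i)]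


lemma exp_half_lt_four : Real.exp (1/2) < 4 := by
  have h := Real.exp_one_lt_d9
  have h2 : Real.exp (1/2) * Real.exp (1/2) = Real.exp 1 := by
    rw [← Real.exp_add]; norm_num
  nlinarith [Real.exp_pos (1/2)]

lemma exp_pow_bound (n : ℕ) : Real.exp 1 ^ n < 2.7182818286 ^ n ∨ n = 0 := by
  cases n with
  | zero => right; rfl
  | succ k => left; exact pow_lt_pow_left₀ Real.exp_one_lt_d9 (Real.exp_pos 1).le (Nat.succ_ne_zero k)

lemma exp_three_halves_lt : Real.exp (3/2) < 4.49 := by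
  have e3 : Real.exp 3 = Real.exp 1 ^ 3 := by
    rw [← Real.exp_nat_mul]; norm_num
  have hb : Real.exp 1 ^ 3 < 2.7182818286 ^ 3 :=
    pow_lt_pow_left₀ Real.exp_one_lt_d9 (Real.exp_pos 1).le (by norm_num)
  have hb2 : (2.7182818286:ℝ) ^ 3 < 20.09 := by norm_num
  have h2 : Real.exp (3/2) * Real.exp (3/2) = Real.exp 3 := by
    rw [← Real.exp_add]; norm_num
  nlinarith [Real.exp_pos (3/2)]

lemma exp_seven_fourths_lt : Real.exp (7/4) < 6 := by
  have e7 : Real.exp 7 = Real.exp 1 ^ 7 := by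
    rw [← Real.exp_nat_mul]; norm_num
  have hb : Real.exp 1 ^ 7 < 2.7182818286 ^ 7 :=
    pow_lt_pow_left₀ Real.exp_one_lt_d9 (Real.exp_pos 1).le (by norm_num)
  have hb2 : (2.7182818286:ℝ) ^ 7 < 1096.64 := by norm_num
  have h2 : Real.exp (7/4) ^ 4 = Real.exp 7 := by
    rw [← Real.exp_nat_mul]; norm_num
  by_contra hcon
  push_neg at hcon
  have : (6:ℝ) ^ 4 ≤ Real.exp (7/4) ^ 4 := pow_le_pow_left₀ (by norm_num) hcon 4
  norm_num at this
  linarith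

lemma exp_two_lt : Real.exp 2 < 7.39 := by
  have h := Real.exp_one_lt_d9
  have e2 : Real.exp 2 = Real.exp 1 ^ 2 := by
    rw [← Real.exp_nat_mul]; norm_num
  nlinarith [Real.exp_pos 1]

lemma numeric : ∀ (n : ℕ) (c : ℝ), 4 * Real.log 2 ≤ c → ⌊c⌋₊ = n →
    Real.exp (c/2) ≤ ∏ j ∈ Finset.range n, (c - j) := by
  intro n
  induction n using Nat.strong_induction_on with
  | _ n ih =>
    intro c hc hfl
    have l2lo := Real.log_two_gt_d9
    have l2hi := Real.log_two_lt_d9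
    have hc0 : (0:ℝ) ≤ c := by linarith
    have hcge : (n:ℝ) ≤ c := hfl ▸ Nat.floor_le hc0
    have hclt : c < n + 1 := by
      have := Nat.lt_floor_add_one c
      rw [hfl] at this
      exact_mod_cast this
    have hc277 : 2.7725887212 < c := by linarith
    by_cases h4 : n < 4
    · -- base cases n = 2 or 3 (n ≤ 1 impossible)
      interval_cases n
      · exfalso; push_cast at hclt; linarith
      · exfalso; push_cast at hclt; linarith
      · -- n = 2, c ∈ (2.7725, 3)
        have hc3 : c < 3 := by push_cast at hclt; linarith
        have hexp : Real.exp (c/2) ≤ Real.exp (3/2) := by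
          apply Real.exp_le_exp.mpr; linarith
        have hprod : ∏ j ∈ Finset.range 2, (c - j) = c * (c - 1) := by
          simp [Finset.prod_range_succ]
        rw [hprod]
        have : (4.49:ℝ) ≤ c * (c-1) := by nlinarith
        linarith [exp_three_halves_lt]
      · -- n = 3, c ∈ [3, 4)
        have hc3 : (3:ℝ) ≤ c := by exact_mod_cast hcge
        have hc4 : c < 4 := by push_cast at hclt; linarith
        have hprod : ∏ j ∈ Finset.range 3, (c - j) = c * (c - 1) * (c - 2) := by
          simp [Finset.prod_range_succ]
        rw [hprod]
        rcases le_total c 3.5 with h35 | h35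
        · have hexp : Real.exp (c/2) ≤ Real.exp (7/4) := by
            apply Real.exp_le_exp.mpr; linarith
          have key : c * (c-1) * (c-2) - 6 = (c - 3) * (c^2 + 2) := by ring
          have : (6:ℝ) ≤ c * (c-1) * (c-2) := by nlinarith
          linarith [exp_seven_fourths_lt]
        · have hexp : Real.exp (c/2) ≤ Real.exp 2 := by
            apply Real.exp_le_exp.mpr; linarith
          have key : c * (c-1) * (c-2) - 13.125 = (c - 3.5) * (c^2 + 0.5*c + 3.75) := by ring
          have : (13.125:ℝ) ≤ c * (c-1) * (c-2) := by nlinarith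
          linarith [exp_two_lt]
    · -- inductive step n ≥ 4
      push_neg at h4
      obtain ⟨k, rfl⟩ : ∃ k, n = k + 1 := ⟨n - 1, by omega⟩
      have hk3 : 3 ≤ k := by omega
      have hc4 : (4:ℝ) ≤ c := by
        have h5 : ((4:ℕ):ℝ) ≤ ((k+1:ℕ):ℝ) := by exact_mod_cast h4
        exact h5.trans hcge
      have hfl' : ⌊c - 1⌋₊ = k := by
        rw [Nat.floor_eq_iff (by linarith : (0:ℝ) ≤ c - 1)]
        constructor
        · push_cast at hcge ⊢; linarith
        · push_cast at hclt ⊢; linarith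
      have hc' : 4 * Real.log 2 ≤ c - 1 := by linarith
      have IH := ih k (by omega) (c - 1) hc' hfl'
      have hprod : ∏ j ∈ Finset.range (k+1), (c - j)
          = (∏ j ∈ Finset.range k, ((c - 1) - j)) * c := by
        rw [Finset.prod_range_succ']
        congr 1
        · apply Finset.prod_congr rfl
          intro j _
          push_cast
          ring
        · norm_num
      have hexp : Real.exp (c/2) = Real.exp (1/2) * Real.exp ((c-1)/2) := by
        rw [← Real.exp_add]; ring_nf
      rw [hprod, hexp]
      have h1 : Real.exp (1/2) ≤ c := by linarith [exp_half_lt_four]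
      have h2 : (0:ℝ) ≤ Real.exp ((c-1)/2) := (Real.exp_pos _).le
      calc Real.exp (1/2) * Real.exp ((c-1)/2)
          ≤ c * Real.exp ((c-1)/2) := mul_le_mul_of_nonneg_right h1 h2
        _ ≤ c * ∏ j ∈ Finset.range k, ((c-1) - j) := mul_le_mul_of_nonneg_left IH (by linarith)
        _ = (∏ j ∈ Finset.range k, ((c-1) - j)) * c := by ring


lemma greedy {m : ℕ} (ν h : Fin m → ℝ) (B : Finset (Fin m)) (θ : ℝ) (hθ0 : 0 ≤ θ)
    (hB1 : ∀ i ∈ B, θ ≤ ν i) (hB2 : ∀ i ∉ B, ν i ≤ θ)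
    (hh0 : ∀ i, 0 ≤ h i) (hh1 : ∀ i, h i ≤ 1)
    (hsum : ∑ i, h i ≤ (B.card : ℝ)) :
    ∑ i, ν i * h i ≤ ∑ i ∈ B, ν i := by
  classical
  have split : ∑ i, ν i * h i = ∑ i ∈ B, ν i * h i + ∑ i ∈ Bᶜ, ν i * h i :=
    (Finset.sum_add_sum_compl B _).symm
  have splith : ∑ i, h i = ∑ i ∈ B, h i + ∑ i ∈ Bᶜ, h i :=
    (Finset.sum_add_sum_compl B _).symm
  have h1 : ∑ i ∈ Bᶜ, ν i * h i ≤ θ * ∑ i ∈ Bᶜ, h i := by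
    rw [Finset.mul_sum]
    apply Finset.sum_le_sum
    intro i hi
    rw [Finset.mem_compl] at hi
    exact mul_le_mul_of_nonneg_right (hB2 i hi) (hh0 i)
  have h2 : ∑ i ∈ Bᶜ, h i ≤ (B.card : ℝ) - ∑ i ∈ B, h i := by linarith
  have h3 : θ * ∑ i ∈ Bᶜ, h i ≤ θ * ((B.card : ℝ) - ∑ i ∈ B, h i) :=
    mul_le_mul_of_nonneg_left h2 hθ0
  have h4 : ∑ i ∈ B, ν i * h i - θ * ∑ i ∈ B, h i ≤ ∑ i ∈ B, ν i - θ * B.card := by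
    have e1 : ∑ i ∈ B, ν i * h i - θ * ∑ i ∈ B, h i = ∑ i ∈ B, (ν i - θ) * h i := by
      rw [Finset.mul_sum, ← Finset.sum_sub_distrib]
      apply Finset.sum_congr rfl; intro i _; ring
    have e2 : ∑ i ∈ B, ν i - θ * B.card = ∑ i ∈ B, (ν i - θ) := by
      rw [Finset.sum_sub_distrib, Finset.sum_const, nsmul_eq_mul]; ring
    rw [e1, e2]
    apply Finset.sum_le_sum
    intro i hi
    have := hB1 i hi
    nlinarith [hh0 i, hh1 i]
  linarith

lemma exists_top_set (m : ℕ) (ν : Fin m → ℝ) (hν0 : ∀ i, 0 ≤ ν i) (hν1 : ∀ i, ν i ≤ 1)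
    (S : ℕ) (hS : S ≤ m) :
    ∃ (B : Finset (Fin m)) (θ : ℝ), B.card = S ∧ 0 ≤ θ ∧
      (∀ i ∈ B, θ ≤ ν i) ∧ (∀ i ∉ B, ν i ≤ θ) := by
  classical
  rcases Nat.eq_zero_or_pos S with rfl | hS1
  · exact ⟨∅, 1, by simp, by norm_num, by simp, fun i _ => hν1 i⟩
  · set σ := Tuple.sort ν with hσ
    have mono : Monotone (ν ∘ σ) := Tuple.monotone_sort ν
    have hmS : m - S < m := by omega
    set j₀ : Fin m := ⟨m - S, hmS⟩ with hj₀
    set θ := ν (σ j₀) with hθ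
    set B : Finset (Fin m) := (Finset.univ.filter fun j : Fin m => m - S ≤ (j : ℕ)).image σ with hB
    have hcardfil : (Finset.univ.filter fun j : Fin m => m - S ≤ (j : ℕ)).card = S := by
      have hbij : (Finset.univ.filter fun j : Fin m => m - S ≤ (j : ℕ)).card
          = (Finset.Ico (m - S) m).card := by
        apply Finset.card_bij (fun (j : Fin m) _ => (j : ℕ))
        · intro a ha
          simp only [Finset.mem_filter] at ha
          simp only [Finset.mem_Ico]
          exact ⟨ha.2, a.isLt⟩
        · intro a _ b _ hab
          exact Fin.val_injective hab
        · intro x hx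
          simp only [Finset.mem_Ico] at hx
          exact ⟨⟨x, hx.2⟩, Finset.mem_filter.mpr ⟨Finset.mem_univ _, hx.1⟩, rfl⟩
      rw [hbij, Nat.card_Ico]
      omega
    refine ⟨B, θ, ?_, hν0 _, ?_, ?_⟩
    · rw [hB, Finset.card_image_of_injective _ σ.injective, hcardfil]
    · intro i hi
      rw [hB, Finset.mem_image] at hi
      obtain ⟨j, hj, rfl⟩ := hi
      simp only [Finset.mem_filter] at hj
      exact mono (show j₀ ≤ j from by rw [Fin.le_def]; exact hj.2)
    · intro i hi
      have hlt : ((σ.symm i : Fin m) : ℕ) < m - S := by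
        by_contra hcon
        push_neg at hcon
        exact hi (by
          rw [hB, Finset.mem_image]
          exact ⟨σ.symm i, Finset.mem_filter.mpr ⟨Finset.mem_univ _, hcon⟩, by simp⟩)
      have hrw : ν i = (ν ∘ σ) (σ.symm i) := by simp
      rw [hrw]
      exact mono (show σ.symm i ≤ j₀ from by rw [Fin.le_def]; exact Nat.le_of_lt hlt)

lemma dot_le {m : ℕ} (ν h ξv : Fin m → ℝ) (c : ℝ)
    (hν : ∀ i, 0 ≤ ν i ∧ ν i ≤ 1) (hξ : ∀ i, ξv i = 0 ∨ ξv i = 1)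
    (hh0 : ∀ i, 0 ≤ h i) (hh1 : ∀ i, h i ≤ 1) (hsum : ∑ i, h i ≤ ∑ i, ξv i)
    (hpermc : ∀ τ : Equiv.Perm (Fin m), ∑ i, ν i * ξv (τ i) ≤ c) :
    ∑ i, ν i * h i ≤ c := by
  classical
  obtain ⟨S, hScard⟩ : ∃ S : ℕ, S = (Finset.univ.filter (fun i => ξv i = 1)).card := ⟨_, rfl⟩
  have hsum' : ∑ i, ξv i = (S : ℝ) := by
    have esplit := Finset.sum_filter_add_sum_filter_not Finset.univ (fun i => ξv i = 1) ξv
    rw [← esplit]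
    have e1 : ∑ i ∈ Finset.univ.filter (fun i => ξv i = 1), ξv i = (S : ℝ) := by
      rw [Finset.sum_congr rfl (fun i hi => (Finset.mem_filter.mp hi).2), Finset.sum_const,
        nsmul_eq_mul, mul_one, hScard]
    have e2 : ∑ i ∈ Finset.univ.filter (fun i => ¬ ξv i = 1), ξv i = 0 := by
      apply Finset.sum_eq_zero
      intro i hi
      rcases hξ i with h0 | h1
      · exact h0
      · exact absurd h1 (Finset.mem_filter.mp hi).2
    rw [e1, e2, add_zero]
  have hSm : S ≤ m := by
    have hcle := Finset.card_filter_le Finset.univ (fun i => ξv i = 1)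
    rw [hScard]
    simpa using hcle
  obtain ⟨B, θ, hBcard, hθ0, hB1, hB2⟩ :=
    exists_top_set m ν (fun i => (hν i).1) (fun i => (hν i).2) S hSm
  have step1 : ∑ i, ν i * h i ≤ ∑ i ∈ B, ν i := by
    apply greedy ν h B θ hθ0 hB1 hB2 hh0 hh1
    rw [hBcard]
    exact hsum.trans_eq hsum'
  have hBA : B.card = (Finset.univ.filter (fun i => ξv i = 1)).card := by
    rw [hBcard, hScard]
  let e : {x // x ∈ B} ≃ {x // x ∈ Finset.univ.filter (fun i => ξv i = 1)} :=
    Finset.equivOfCardEq hBA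
  let τ : Equiv.Perm (Fin m) := e.extendSubtype
  have hτ1 : ∀ i ∈ B, ξv (τ i) = 1 := by
    intro i hi
    have hmem := Equiv.extendSubtype_mem e i hi
    exact (Finset.mem_filter.mp hmem).2
  have hτ0 : ∀ i ∉ B, ξv (τ i) = 0 := by
    intro i hi
    have hnot := Equiv.extendSubtype_not_mem e i hi
    rcases hξ (τ i) with h0 | h1
    · exact h0
    · exact absurd (Finset.mem_filter.mpr ⟨Finset.mem_univ (τ i), h1⟩) hnot
  have step2 : ∑ i ∈ B, ν i = ∑ i, ν i * ξv (τ i) := by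
    rw [← Finset.sum_add_sum_compl B (fun i => ν i * ξv (τ i))]
    have e1 : ∑ i ∈ B, ν i * ξv (τ i) = ∑ i ∈ B, ν i := by
      apply Finset.sum_congr rfl
      intro i hi; rw [hτ1 i hi, mul_one]
    have e2 : ∑ i ∈ Bᶜ, ν i * ξv (τ i) = 0 := by
      apply Finset.sum_eq_zero
      intro i hi
      rw [hτ0 i (Finset.mem_compl.mp hi), mul_zero]
    rw [e1, e2, add_zero]
  rw [step2] at step1
  exact step1.trans (hpermc τ)


lemma tail_bound {m : ℕ} {Ω : Type} [MeasurableSpace Ω] (μ : Measure Ω)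
    [IsProbabilityMeasure μ]
    (ξ : Fin m → Ω → ℝ) (hmeas : ∀ i, Measurable (ξ i))
    (h01 : ∀ i ω, ξ i ω = 0 ∨ ξ i ω = 1)
    (γ : ℝ) (hγ0 : 0 ≤ γ)
    (hber : ∀ i, μ {ω | ξ i ω = 1} = ENNReal.ofReal γ)
    (hindep : iIndepFun ξ μ)
    (ν : Fin m → ℝ) (hν : ∀ i, 0 ≤ ν i ∧ ν i ≤ 1)
    (hγν : γ * ∑ i, ν i ≤ 1) (r : ℕ) (c : ℝ) (hGc : 0 < G r c) :
    μ {ω | c < ∑ i, ν i * ξ i ω} ≤ ENNReal.ofReal (1 / G r c) := by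
  classical
  set f : Ω → ℝ≥0∞ := fun ω => ENNReal.ofReal (esym Finset.univ (fun i => ν i * ξ i ω) r)
    with hf
  have hrfacpos : (0:ℝ) < (r.factorial : ℝ) := by positivity
  have hξ01 : ∀ i ω, 0 ≤ ξ i ω ∧ ξ i ω ≤ 1 := by
    intro i ω; rcases h01 i ω with h | h <;> rw [h] <;> norm_num
  have hwb : ∀ ω, ∀ i ∈ Finset.univ, 0 ≤ ν i * ξ i ω ∧ ν i * ξ i ω ≤ 1 := by
    intro ω i _
    refine ⟨mul_nonneg (hν i).1 (hξ01 i ω).1, ?_⟩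
    exact mul_le_one₀ (hν i).2 (hξ01 i ω).1 (hξ01 i ω).2
  have hfmeas : Measurable f := by
    apply Measurable.ennreal_ofReal
    unfold esym
    apply Finset.measurable_sum
    intro A _
    apply Finset.measurable_prod
    intro i _
    exact (measurable_const.mul (hmeas i))
  set ε : ℝ≥0∞ := ENNReal.ofReal (G r c / (r.factorial : ℝ)) with hε
  have hsubset : {ω | c < ∑ i, ν i * ξ i ω} ⊆ {ω | ε ≤ f ω} := by
    intro ω hω
    simp only [Set.mem_setOf_eq] at hω ⊢
    have h1 : G r c ≤ G r (∑ i, ν i * ξ i ω) := G_mono r hω.le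
    have h2 := esym_ge Finset.univ (fun i => ν i * ξ i ω) r (hwb ω)
    rw [hf, hε]
    apply ENNReal.ofReal_le_ofReal
    calc G r c / (r.factorial : ℝ) ≤ G r (∑ i, ν i * ξ i ω) / (r.factorial : ℝ) :=
          div_le_div_of_nonneg_right h1 hrfacpos.le
      _ ≤ _ := h2
  have markov := mul_meas_ge_le_lintegral₀ (μ := μ) hfmeas.aemeasurable ε
  -- compute the lintegral
  have hintsets : ∀ A : Finset (Fin m), MeasurableSet (⋂ i ∈ A, {ω | ξ i ω = 1}) := by
    intro A
    apply MeasurableSet.biInter (Set.to_countable _)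
    intro i _
    exact (hmeas i) (measurableSet_singleton 1)
  have hterm : ∀ A : Finset (Fin m), A.card = r →
      ∫⁻ ω, ENNReal.ofReal (∏ i ∈ A, ν i * ξ i ω) ∂μ
        = ENNReal.ofReal (∏ i ∈ A, (γ * ν i)) := by
    intro A hAcard
    have hpt : ∀ ω, ENNReal.ofReal (∏ i ∈ A, ν i * ξ i ω)
        = (⋂ i ∈ A, {ω' | ξ i ω' = 1}).indicator
            (fun _ => ENNReal.ofReal (∏ i ∈ A, ν i)) ω := by
      intro ω
      by_cases hall : ∀ i ∈ A, ξ i ω = 1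
      · have hmem : ω ∈ ⋂ i ∈ A, {ω' | ξ i ω' = 1} := by
          simp only [Set.mem_iInter, Set.mem_setOf_eq]
          exact hall
        rw [Set.indicator_of_mem hmem]
        congr 1
        apply Finset.prod_congr rfl
        intro i hi
        rw [hall i hi, mul_one]
      · push_neg at hall
        obtain ⟨i, hiA, hi1⟩ := hall
        have hnmem : ω ∉ ⋂ i ∈ A, {ω' | ξ i ω' = 1} := by
          simp only [Set.mem_iInter, Set.mem_setOf_eq]
          push_neg
          exact ⟨i, hiA, hi1⟩
        rw [Set.indicator_of_notMem hnmem]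
        have : ξ i ω = 0 := (h01 i ω).resolve_right hi1
        rw [Finset.prod_eq_zero hiA (by rw [this, mul_zero]), ENNReal.ofReal_zero]
    calc ∫⁻ ω, ENNReal.ofReal (∏ i ∈ A, ν i * ξ i ω) ∂μ
        = ∫⁻ ω, (⋂ i ∈ A, {ω' | ξ i ω' = 1}).indicator
            (fun _ => ENNReal.ofReal (∏ i ∈ A, ν i)) ω ∂μ := by
          apply lintegral_congr hpt
      _ = ENNReal.ofReal (∏ i ∈ A, ν i) * μ (⋂ i ∈ A, {ω' | ξ i ω' = 1}) := by
          rw [lintegral_indicator_const (hintsets A)]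
      _ = ENNReal.ofReal (∏ i ∈ A, ν i) * ∏ i ∈ A, μ {ω' | ξ i ω' = 1} := by
          congr 1
          apply hindep.meas_biInter
          intro i _
          exact ⟨{1}, measurableSet_singleton 1, rfl⟩
      _ = ENNReal.ofReal (∏ i ∈ A, ν i) * ∏ i ∈ A, ENNReal.ofReal γ := by
          congr 1
          exact Finset.prod_congr rfl fun i _ => hber i
      _ = ENNReal.ofReal (∏ i ∈ A, ν i) * ENNReal.ofReal (∏ i ∈ A, γ) := by
          congr 1
          rw [← ENNReal.ofReal_prod_of_nonneg]
          intro i _; exact hγ0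
      _ = ENNReal.ofReal (∏ i ∈ A, (γ * ν i)) := by
          rw [← ENNReal.ofReal_mul (Finset.prod_nonneg fun i _ => (hν i).1), ← Finset.prod_mul_distrib]
          congr 1
          apply Finset.prod_congr rfl
          intro i _; ring
  have hlint : ∫⁻ ω, f ω ∂μ ≤ ENNReal.ofReal (1 / (r.factorial : ℝ)) := by
    have hfeq : ∀ ω, f ω = ∑ A ∈ Finset.univ.powersetCard r,
        ENNReal.ofReal (∏ i ∈ A, ν i * ξ i ω) := by
      intro ω
      show ENNReal.ofReal (∑ A ∈ Finset.univ.powersetCard r, ∏ i ∈ A, ν i * ξ i ω) = _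
      rw [ENNReal.ofReal_sum_of_nonneg]
      intro A _
      exact Finset.prod_nonneg fun i hi => (hwb ω i (Finset.mem_univ i)).1
    calc ∫⁻ ω, f ω ∂μ
        = ∑ A ∈ Finset.univ.powersetCard r, ∫⁻ ω, ENNReal.ofReal (∏ i ∈ A, ν i * ξ i ω) ∂μ := by
          rw [lintegral_congr hfeq, lintegral_finset_sum]
          intro A _
          apply Measurable.ennreal_ofReal
          apply Finset.measurable_prod
          intro i _
          exact measurable_const.mul (hmeas i)
      _ = ∑ A ∈ Finset.univ.powersetCard r, ENNReal.ofReal (∏ i ∈ A, (γ * ν i)) := by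
          apply Finset.sum_congr rfl
          intro A hA
          exact hterm A (Finset.mem_powersetCard.mp hA).2
      _ = ENNReal.ofReal (esym Finset.univ (fun i => γ * ν i) r) := by
          unfold esym
          rw [ENNReal.ofReal_sum_of_nonneg]
          intro A _
          exact Finset.prod_nonneg fun i _ => mul_nonneg hγ0 (hν i).1
      _ ≤ ENNReal.ofReal (1 / (r.factorial : ℝ)) := by
          apply ENNReal.ofReal_le_ofReal
          have h1 := esym_le Finset.univ (fun i => γ * ν i) r
            (fun i _ => mul_nonneg hγ0 (hν i).1)
          have h2 : ∑ i, γ * ν i = γ * ∑ i, ν i := by rw [Finset.mul_sum]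
          have h3 : (∑ i, γ * ν i) ^ r ≤ 1 := by
            apply pow_le_one₀
            · rw [h2]; exact mul_nonneg hγ0 (Finset.sum_nonneg fun i _ => (hν i).1)
            · rw [h2]; exact hγν
          calc esym Finset.univ (fun i => γ * ν i) r
              ≤ (∑ i, γ * ν i) ^ r / (r.factorial : ℝ) := h1
            _ ≤ 1 / (r.factorial : ℝ) := div_le_div_of_nonneg_right h3 hrfacpos.le
  -- combine
  have hε0 : ε ≠ 0 := by
    rw [hε]
    simp only [ne_eq, ENNReal.ofReal_eq_zero, not_le]
    positivity
  have hεtop : ε ≠ ⊤ := ENNReal.ofReal_ne_top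
  have key : μ {ω | c < ∑ i, ν i * ξ i ω} ≤ ENNReal.ofReal (1 / (r.factorial : ℝ)) / ε := by
    rw [ENNReal.le_div_iff_mul_le (Or.inl hε0) (Or.inl hεtop)]
    calc μ {ω | c < ∑ i, ν i * ξ i ω} * ε ≤ μ {ω | ε ≤ f ω} * ε := by
          apply mul_le_mul_of_nonneg_right (measure_mono hsubset) zero_le
      _ = ε * μ {ω | ε ≤ f ω} := mul_comm _ _
      _ ≤ ∫⁻ ω, f ω ∂μ := markov
      _ ≤ _ := hlint
  have hdiv : ENNReal.ofReal (1 / (r.factorial : ℝ)) / ε = ENNReal.ofReal (1 / G r c) := by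
    rw [hε, ← ENNReal.ofReal_div_of_pos (by positivity)]
    congr 1
    field_simp
  rw [hdiv] at key
  exact key


end RBIS
end

open RBIS

/-- For a permutation-invariant intersection of `L` budget constraints, the random budget
set `Ṽ` built from i.i.d. Bernoulli(γ) variables is contained in `4 log L · U` with
probability at least `1 − 1/L`. -/
theorem random_budget_inside_scaled_U
    (m L : ℕ) (hm : 1 ≤ m) (hL : 2 ≤ L)
    (ν : Fin L → Fin m → ℝ) (hν : ∀ ℓ i, ν ℓ i ∈ Set.Icc (0 : ℝ) 1)
    (U : Set (Fin m → ℝ))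
    (hU : U = { h | (∀ i, 0 ≤ h i ∧ h i ≤ 1) ∧ ∀ ℓ, ∑ i, ν ℓ i * h i ≤ 1 })
    (hperm : ∀ h ∈ U, ∀ τ : Equiv.Perm (Fin m), (fun i => h (τ i)) ∈ U)
    (γ : ℝ) (hγ0 : 0 ≤ γ) (hγ1 : γ ≤ 1)
    (hγU : (fun _ : Fin m => γ) ∈ U)
    (Ω : Type) [MeasurableSpace Ω] (μ : Measure Ω) [IsProbabilityMeasure μ]
    (ξ : Fin m → Ω → ℝ) (hmeas : ∀ i, Measurable (ξ i))
    (h01 : ∀ i ω, ξ i ω = 0 ∨ ξ i ω = 1)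
    (hber : ∀ i, μ {ω | ξ i ω = 1} = ENNReal.ofReal γ)
    (hindep : iIndepFun ξ μ) :
    ENNReal.ofReal (1 - 1 / (L : ℝ)) ≤
      μ {ω | { h : Fin m → ℝ | (∀ i, 0 ≤ h i ∧ h i ≤ 1) ∧ ∑ i, h i ≤ ∑ i, ξ i ω } ⊆
        (4 * Real.log L) • U} := by
  classical
  have hL2 : (2:ℝ) ≤ (L:ℝ) := by exact_mod_cast hL
  have hLpos : (0:ℝ) < L := by linarith
  have l2lo := Real.log_two_gt_d9
  set c : ℝ := 4 * Real.log L with hc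
  have hlog2L : Real.log 2 ≤ Real.log L := Real.log_le_log (by norm_num) hL2
  have hc2 : 4 * Real.log 2 ≤ c := by rw [hc]; linarith
  have hc1 : 1 ≤ c := by linarith
  have hcpos : (0:ℝ) < c := by linarith
  set r : ℕ := ⌊c⌋₊ with hr
  -- G r c ≥ L ^ 2
  have hflr : ((r:ℝ)) ≤ c := Nat.floor_le (by linarith)
  have hGprod : G r c = ∏ j ∈ Finset.range r, (c - j) := by
    apply Finset.prod_congr rfl
    intro j hj
    rw [Finset.mem_range] at hj
    have : (j:ℝ) ≤ c := by
      have : (j:ℝ) < r := by exact_mod_cast hj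
      linarith
    rw [max_eq_left (by linarith)]
  have hexp : Real.exp (c/2) = (L:ℝ)^2 := by
    have h2 : c / 2 = (2:ℕ) * Real.log L := by rw [hc]; push_cast; ring
    rw [h2, Real.exp_nat_mul, Real.exp_log hLpos]
  have hGc : (L:ℝ)^2 ≤ G r c := by
    have hnum := numeric r c hc2 rfl
    rw [hGprod, ← hexp]
    exact hnum
  have hGcpos : (0:ℝ) < G r c := lt_of_lt_of_le (by positivity) hGc
  -- the good event
  set E : Set Ω := {ω | ∀ ℓ, ∑ i, ν ℓ i * ξ i ω ≤ c} with hE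
  have hEmeas : MeasurableSet E := by
    have : E = ⋂ ℓ, {ω | ∑ i, ν ℓ i * ξ i ω ≤ c} := by
      ext ω; simp [hE, Set.mem_iInter]
    rw [this]
    apply MeasurableSet.iInter
    intro ℓ
    apply measurableSet_le
    · exact Finset.measurable_sum _ (fun i _ => measurable_const.mul (hmeas i))
    · exact measurable_const
  -- Step A : inclusion
  have hsubset : E ⊆ {ω | { h : Fin m → ℝ |
      (∀ i, 0 ≤ h i ∧ h i ≤ 1) ∧ ∑ i, h i ≤ ∑ i, ξ i ω } ⊆ c • U} := by
    intro ω hω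
    intro h hh
    obtain ⟨hbox, hhsum⟩ := hh
    have hpermc : ∀ ℓ, ∀ τ : Equiv.Perm (Fin m), ∑ i, ν ℓ i * ξ (τ i) ω ≤ c := by
      have hu0 : (fun i => ξ i ω / c) ∈ U := by
        rw [hU]
        constructor
        · intro i
          show 0 ≤ ξ i ω / c ∧ ξ i ω / c ≤ 1
          rcases h01 i ω with h0 | h1
          · rw [h0]; norm_num
          · rw [h1]; constructor
            · positivity
            · rw [div_le_one hcpos]; linarith
        · intro ℓ'
          show ∑ i, ν ℓ' i * (ξ i ω / c) ≤ 1
          have := hω ℓ'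
          calc ∑ i, ν ℓ' i * (ξ i ω / c) = (∑ i, ν ℓ' i * ξ i ω) / c := by
                rw [Finset.sum_div]
                apply Finset.sum_congr rfl
                intro i _; ring
            _ ≤ 1 := by rw [div_le_one hcpos]; exact this
      intro ℓ τ
      have hmem := hperm _ hu0 τ
      rw [hU] at hmem
      have this : ∑ i, ν ℓ i * (ξ (τ i) ω / c) ≤ 1 := hmem.2 ℓ
      have heq : ∑ i, ν ℓ i * (ξ (τ i) ω / c) = (∑ i, ν ℓ i * ξ (τ i) ω) / c := by
        rw [Finset.sum_div]
        apply Finset.sum_congr rfl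
        intro i _; ring
      rw [heq, div_le_one hcpos] at this
      exact this
    have key : ∀ ℓ, ∑ i, ν ℓ i * h i ≤ c := by
      intro ℓ
      apply dot_le (ν ℓ) h (fun i => ξ i ω) c
        (fun i => ⟨(hν ℓ i).1, (hν ℓ i).2⟩) (fun i => h01 i ω)
        (fun i => (hbox i).1) (fun i => (hbox i).2) hhsum
      exact hpermc ℓ
    refine Set.mem_smul_set.mpr ⟨fun i => h i / c, ?_, ?_⟩
    · rw [hU]
      constructor
      · intro i
        constructor
        · exact div_nonneg (hbox i).1 hcpos.le
        · rw [div_le_one hcpos]; linarith [(hbox i).2]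
      · intro ℓ
        show ∑ i, ν ℓ i * (h i / c) ≤ 1
        have heq : ∑ i, ν ℓ i * (h i / c) = (∑ i, ν ℓ i * h i) / c := by
          rw [Finset.sum_div]
          apply Finset.sum_congr rfl
          intro i _; ring
        rw [heq, div_le_one hcpos]
        exact key ℓ
    · funext i
      simp only [Pi.smul_apply, smul_eq_mul]
      field_simp
  -- Step B : probability of complement
  have hcompl : μ Eᶜ ≤ ENNReal.ofReal (1 / L) := by
    have hEc : Eᶜ = ⋃ ℓ, {ω | c < ∑ i, ν ℓ i * ξ i ω} := by
      ext ω
      simp [hE, not_forall, not_le]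
    rw [hEc]
    have hone : ∀ ℓ : Fin L, μ {ω | c < ∑ i, ν ℓ i * ξ i ω} ≤ ENNReal.ofReal (1 / (L:ℝ)^2) := by
      intro ℓ
      have hγν : γ * ∑ i, ν ℓ i ≤ 1 := by
        rw [hU] at hγU
        have := hγU.2 ℓ
        calc γ * ∑ i, ν ℓ i = ∑ i, ν ℓ i * γ := by rw [Finset.mul_sum]; apply Finset.sum_congr rfl; intro i _; ring
          _ ≤ 1 := this
      calc μ {ω | c < ∑ i, ν ℓ i * ξ i ω}
          ≤ ENNReal.ofReal (1 / G r c) :=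
            tail_bound μ ξ hmeas h01 γ hγ0 hber hindep (ν ℓ)
              (fun i => ⟨(hν ℓ i).1, (hν ℓ i).2⟩) hγν r c hGcpos
        _ ≤ ENNReal.ofReal (1 / (L:ℝ)^2) := by
            apply ENNReal.ofReal_le_ofReal
            apply div_le_div_of_nonneg_left (by norm_num) (by positivity) hGc
    calc μ (⋃ ℓ, {ω | c < ∑ i, ν ℓ i * ξ i ω}) ≤ ∑' ℓ, μ {ω | c < ∑ i, ν ℓ i * ξ i ω} :=
          measure_iUnion_le _
      _ = ∑ ℓ, μ {ω | c < ∑ i, ν ℓ i * ξ i ω} := tsum_fintype _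
      _ ≤ ∑ _ℓ : Fin L, ENNReal.ofReal (1 / (L:ℝ)^2) := Finset.sum_le_sum (fun ℓ _ => hone ℓ)
      _ = (L : ℝ≥0∞) * ENNReal.ofReal (1 / (L:ℝ)^2) := by
          rw [Finset.sum_const, Finset.card_univ, Fintype.card_fin, nsmul_eq_mul]
      _ = ENNReal.ofReal ((L:ℝ) * (1 / (L:ℝ)^2)) := by
          rw [ENNReal.ofReal_mul (by positivity), ENNReal.ofReal_natCast]
      _ = ENNReal.ofReal (1 / L) := by
          congr 1
          field_simp
  -- conclude
  have hfinal : ENNReal.ofReal (1 - 1 / (L:ℝ)) ≤ μ E := by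
    have h1L : (0:ℝ) ≤ 1 - 1/(L:ℝ) := by
      rw [sub_nonneg, div_le_one hLpos]; linarith
    have hadd : ENNReal.ofReal (1 - 1 / (L:ℝ)) + ENNReal.ofReal (1 / (L:ℝ)) = 1 := by
      rw [← ENNReal.ofReal_add h1L (by positivity)]
      norm_num
    have h1 : μ E + μ Eᶜ = 1 := by
      rw [measure_add_measure_compl hEmeas, measure_univ]
    have h2 : μ E = 1 - μ Eᶜ := ENNReal.eq_sub_of_add_eq (measure_ne_top μ _) h1
    have h3 : ENNReal.ofReal (1 - 1 / (L:ℝ)) = 1 - ENNReal.ofReal (1 / (L:ℝ)) :=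
      ENNReal.eq_sub_of_add_eq ENNReal.ofReal_ne_top hadd
    rw [h2, h3]
    exact tsub_le_tsub_left hcompl 1
  exact le_trans hfinal (measure_mono hsubset)
end

section
/- Let m ≥ 1, L ≥ 2, let S_ℓ ⊆ {1,…,m} and w_{ℓ i} ∈ (0,1] for ℓ ∈ {1,…,L}, i ∈ S_ℓ, and let U = { h ∈ [0,1]^m : Σ_{i ∈ S_ℓ} w_{ℓ i} h_i ≤ 1 for every ℓ ∈ {1,…,L} }. Assume U is permutation invariant, i.e., for every h ∈ U and every permutation τ of {1,…,m}, (h_{τ(1)},…,h_{τ(m)}) ∈ U, and assume e_i ∈ U for every i ∈ {1,…,m}. Then there exists t > 0 such that the budget of uncertainty set V = { h ∈ [0,1]^m : Σ_{i=1}^m h_i ≤ t } satisfies (1/(4 log L)) · V ⊆ U and U ⊆ 2 · V, where λ · V = { λ v : v ∈ V } for a scalar λ > 0. -/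
set_option maxHeartbeats 2000000

open scoped Pointwise
open Finset

lemma exists_min_exchange {α : Type*} [DecidableEq α] [Fintype α]
    (v : α → ℝ) (n : ℕ) (hn : n ≤ Fintype.card α) :
    ∃ K : Finset α, K.card = n ∧ ∀ i ∈ K, ∀ j, j ∉ K → v i ≤ v j := by
  have hne : ((Finset.univ : Finset α).powersetCard n).Nonempty := by
    rw [Finset.powersetCard_nonempty]
    simpa using hn
  obtain ⟨K, hKmem, hmin⟩ :=
    Finset.exists_min_image _ (fun K => ∑ i ∈ K, v i) hne
  rw [Finset.mem_powersetCard] at hKmem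
  refine ⟨K, hKmem.2, ?_⟩
  intro i hi j hj
  have hjK : j ∉ K.erase i := fun h => hj (Finset.mem_of_mem_erase h)
  have hcard : (insert j (K.erase i)).card = n := by
    rw [Finset.card_insert_of_notMem hjK, Finset.card_erase_of_mem hi, hKmem.2]
    have : 0 < n := hKmem.2 ▸ Finset.card_pos.2 ⟨i, hi⟩
    omega
  have hmem' : insert j (K.erase i) ∈ (Finset.univ : Finset α).powersetCard n := by
    rw [Finset.mem_powersetCard]; exact ⟨Finset.subset_univ _, hcard⟩
  have hle := hmin _ hmem'
  rw [Finset.sum_insert hjK, Finset.sum_erase_eq_sub hi] at hle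
  linarith

/-- Geometric property of permutation-invariant intersections of budget constraints:
there is a single budget of uncertainty set `V` with `(1/(4 log L)) V ⊆ U ⊆ 2V`. -/
theorem permutation_invariant_sandwiched_by_budget_set
    (m L : ℕ) (hm : 1 ≤ m) (hL : 2 ≤ L)
    (S : Fin L → Finset (Fin m))
    (w : Fin L → Fin m → ℝ) (hw : ∀ ℓ, ∀ i ∈ S ℓ, 0 < w ℓ i ∧ w ℓ i ≤ 1)
    (U : Set (Fin m → ℝ))
    (hU : U = { h | (∀ i, 0 ≤ h i ∧ h i ≤ 1) ∧ ∀ ℓ, ∑ i ∈ S ℓ, w ℓ i * h i ≤ 1 })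
    (hperm : ∀ h ∈ U, ∀ τ : Equiv.Perm (Fin m), (fun i => h (τ i)) ∈ U)
    (hei : ∀ i : Fin m, (Pi.single i (1 : ℝ) : Fin m → ℝ) ∈ U) :
    ∃ t : ℝ, 0 < t ∧
      (1 / (4 * Real.log L)) •
          { h : Fin m → ℝ | (∀ i, 0 ≤ h i ∧ h i ≤ 1) ∧ ∑ i, h i ≤ t } ⊆ U ∧
      U ⊆ (2 : ℝ) • { h : Fin m → ℝ | (∀ i, 0 ≤ h i ∧ h i ≤ 1) ∧ ∑ i, h i ≤ t } := by
  haveI : NeZero m := ⟨by omega⟩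
  have hm0 : (0:ℝ) < m := by exact_mod_cast Nat.lt_of_lt_of_le Nat.zero_lt_one hm
  have hm1 : (1:ℝ) ≤ m := by exact_mod_cast hm
  have hL0 : (0:ℝ) < L := by positivity
  have hL2' : (2:ℝ) ≤ L := by exact_mod_cast hL
  have hlog2 : (0.6931471803 : ℝ) < Real.log 2 := Real.log_two_gt_d9
  have hlogL2 : Real.log 2 ≤ Real.log L := Real.log_le_log (by norm_num) hL2'
  set C : ℝ := 4 * Real.log L with hCdef
  have hC2 : (2:ℝ) ≤ C := by
    have : (2:ℝ) ≤ 4 * Real.log 2 := by nlinarith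
    nlinarith
  have hC0 : (0:ℝ) < C := by linarith
  have hC1 : (1:ℝ) ≤ C := by linarith
  -- extended weights
  set w' : Fin L → Fin m → ℝ := fun ℓ i => if i ∈ S ℓ then w ℓ i else 0 with hw'def
  have hw'0 : ∀ ℓ i, 0 ≤ w' ℓ i := by
    intro ℓ i; simp only [hw'def]
    split
    · exact le_of_lt (hw ℓ i (by assumption)).1
    · exact le_rfl
  have hw'1 : ∀ ℓ i, w' ℓ i ≤ 1 := by
    intro ℓ i; simp only [hw'def]
    split
    · exact (hw ℓ i (by assumption)).2
    · norm_num
  have hsum_eq : ∀ (ℓ : Fin L) (h : Fin m → ℝ),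
      ∑ i ∈ S ℓ, w ℓ i * h i = ∑ i, w' ℓ i * h i := by
    intro ℓ h
    rw [show (∑ i, w' ℓ i * h i) = ∑ i : Fin m, if i ∈ S ℓ then w ℓ i * h i else 0 by
      apply Finset.sum_congr rfl; intro i _; simp only [hw'def, ite_mul, zero_mul]]
    rw [Finset.sum_ite_mem, Finset.univ_inter]
  -- membership characterization
  have hmemU : ∀ h : Fin m → ℝ, h ∈ U ↔
      ((∀ i, 0 ≤ h i ∧ h i ≤ 1) ∧ ∀ ℓ, ∑ i, w' ℓ i * h i ≤ 1) := by
    intro h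
    rw [hU, Set.mem_setOf_eq]
    constructor
    · rintro ⟨h1, h2⟩; exact ⟨h1, fun ℓ => (hsum_eq ℓ h) ▸ h2 ℓ⟩
    · rintro ⟨h1, h2⟩; exact ⟨h1, fun ℓ => (hsum_eq ℓ h) ▸ h2 ℓ⟩
  -- convexity
  have hconvex : Convex ℝ U := by
    intro x hx y hy a b ha hb hab
    rw [hmemU] at hx hy ⊢
    refine ⟨fun i => ?_, fun ℓ => ?_⟩
    · have h1 := (hx.1 i); have h2 := (hy.1 i)
      simp only [Pi.add_apply, Pi.smul_apply, smul_eq_mul]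
      constructor
      · nlinarith [h1.1, h2.1]
      · nlinarith [h1.2, h2.2]
    · have : ∑ i, w' ℓ i * ((a • x + b • y) i)
          = a * (∑ i, w' ℓ i * x i) + b * (∑ i, w' ℓ i * y i) := by
        rw [Finset.mul_sum, Finset.mul_sum, ← Finset.sum_add_distrib]
        apply Finset.sum_congr rfl; intro i _
        simp only [Pi.add_apply, Pi.smul_apply, smul_eq_mul]; ring
      rw [this]
      nlinarith [hx.2 ℓ, hy.2 ℓ]
  -- totals
  set W : Fin L → ℝ := fun ℓ => ∑ i, w' ℓ i with hWdef
  have hW0 : ∀ ℓ, 0 ≤ W ℓ := fun ℓ => Finset.sum_nonneg (fun i _ => hw'0 ℓ i)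
  have hWm : ∀ ℓ, W ℓ ≤ m := by
    intro ℓ
    calc W ℓ ≤ ∑ _i : Fin m, (1:ℝ) := Finset.sum_le_sum (fun i _ => hw'1 ℓ i)
    _ = m := by simp
  haveI : Nonempty (Fin L) := ⟨⟨0, by omega⟩⟩
  set Wmax : ℝ := max ((Finset.univ : Finset (Fin L)).sup' Finset.univ_nonempty W) 1
    with hWmaxdef
  have hWmax1 : 1 ≤ Wmax := le_max_right _ _
  have hWmax0 : 0 < Wmax := by linarith
  have hWmaxm : Wmax ≤ m := by
    apply max_le _ hm1
    exact Finset.sup'_le _ _ (fun ℓ _ => hWm ℓ)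
  have hWle : ∀ ℓ, W ℓ ≤ Wmax :=
    fun ℓ => le_trans (Finset.le_sup' W (Finset.mem_univ ℓ)) (le_max_left _ _)
  set s : ℝ := m / Wmax with hsdef
  have hs1 : 1 ≤ s := by rw [hsdef, le_div_iff₀ hWmax0]; linarith
  have hs0 : 0 < s := by linarith
  have hsm : s ≤ m := by
    rw [hsdef]; apply div_le_self (le_of_lt hm0) hWmax1
  have hsWmax : s * Wmax = m := by
    rw [hsdef]; field_simp
  -- averaging over cyclic shifts: W ℓ * Σ h ≤ m
  have hsumle : ∀ h ∈ U, ∀ ℓ, W ℓ * (∑ i, h i) ≤ m := by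
    intro h hh ℓ
    set σ : ℝ := ∑ i, h i with hσ
    have hflat : (fun _ : Fin m => σ / m) ∈ U := by
      have hz : ∀ r ∈ (Finset.univ : Finset (Fin m)),
          (fun i => h ((Equiv.addLeft r) i)) ∈ U :=
        fun r _ => hperm h hh (Equiv.addLeft r)
      have hww0 : ∀ r ∈ (Finset.univ : Finset (Fin m)),
          (0:ℝ) ≤ (fun _ : Fin m => (1:ℝ)/m) r := fun _ _ => by positivity
      have hww1 : ∑ _r : Fin m, (1:ℝ)/m = 1 := by
        rw [Finset.sum_const, Finset.card_univ, Fintype.card_fin, nsmul_eq_mul]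
        field_simp
      have hmem := Convex.sum_mem hconvex hww0 hww1 hz
      convert hmem using 1
      funext i
      rw [Finset.sum_apply]
      have hterm : ∀ r : Fin m,
          (((1:ℝ)/m) • fun j => h ((Equiv.addLeft r) j)) i = (1/(m:ℝ)) * h (r + i) :=
        fun r => by simp [Equiv.coe_addLeft]
      rw [Finset.sum_congr rfl (fun r _ => hterm r), ← Finset.mul_sum]
      have hre : ∑ r : Fin m, h (r + i) = σ := by
        rw [hσ]
        exact Equiv.sum_comp (Equiv.addRight i) h
      rw [hre]; ring
    have hcon := ((hmemU _).1 hflat).2 ℓ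
    rw [← Finset.sum_mul] at hcon
    have hcon' : W ℓ * σ / m ≤ 1 := by rw [mul_div_assoc]; exact hcon
    exact (div_le_one hm0).1 hcon'
  have hsum_le_s : ∀ h ∈ U, ∑ i, h i ≤ s := by
    intro h hh
    have hnn : 0 ≤ ∑ i, h i :=
      Finset.sum_nonneg (fun i _ => ((hmemU h).1 hh).1 i |>.1)
    have hm' : ∑ i, h i ≤ m := by
      calc ∑ i, h i ≤ ∑ _i : Fin m, (1:ℝ) :=
            Finset.sum_le_sum (fun i _ => ((hmemU h).1 hh).1 i |>.2)
      _ = m := by simp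
    rw [hsdef, le_div_iff₀ hWmax0]
    rcases le_total ((Finset.univ : Finset (Fin L)).sup' Finset.univ_nonempty W) 1 with
      hc | hc
    · rw [hWmaxdef, max_eq_right hc]; linarith
    · rw [hWmaxdef, max_eq_left hc]
      obtain ⟨ℓ₀, _, hℓ₀⟩ := Finset.exists_mem_eq_sup' Finset.univ_nonempty W
      rw [hℓ₀]
      have := hsumle h hh ℓ₀
      linarith
  -- choice of k
  set k : ℕ := ⌈s/2⌉₊ with hkdef
  have hk1 : 1 ≤ k := Nat.ceil_pos.2 (by positivity)
  have hkub : (k:ℝ) < s/2 + 1 := Nat.ceil_lt_add_one (by positivity)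
  have htk : s/2 ≤ (k:ℝ) := Nat.le_ceil _
  have hks : (k:ℝ) ≤ s := by
    rcases le_total s 2 with hc | hc
    · have : k ≤ 1 := Nat.ceil_le.2 (by linarith)
      have : (k:ℝ) ≤ 1 := by exact_mod_cast this
      linarith
    · linarith
  have hkm2 : 2 * k ≤ m + 1 := by
    have : (2 * k : ℝ) < m + 2 := by push_cast; linarith
    have := this
    exact_mod_cast by
      have h2 : ((2*k : ℕ) : ℝ) < ((m + 2 : ℕ) : ℝ) := by push_cast; linarith
      have := Nat.cast_lt.1 h2
      omega
  have hkm : k ≤ m := by omega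
  -- good set
  have hkmR : (k:ℝ) ≤ m := by exact_mod_cast hkm
  have hkm2R : 2*(k:ℝ) ≤ (m:ℝ) + 1 := by exact_mod_cast hkm2
  have hk1R : (1:ℝ) ≤ k := by exact_mod_cast hk1
  have harith : 2 * (k:ℝ) * m ≤ 3 * s * ((m:ℝ) - k + 1) := by
    have hs2k : 2*(k:ℝ) - 2 ≤ s := by linarith [hkub]
    rcases Nat.lt_or_ge k 2 with hk2 | hk2
    · have hkeq : k = 1 := by omega
      rw [hkeq]; push_cast
      nlinarith
    · have hk2' : (2:ℝ) ≤ k := by exact_mod_cast hk2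
      have hA : (0:ℝ) ≤ (m:ℝ) - (2*k - 1) := by linarith
      have hB : (0:ℝ) ≤ 2*(k:ℝ) - 3 := by linarith
      have hCc : (0:ℝ) ≤ (m:ℝ) - k + 1 := by linarith
      have hD : (0:ℝ) ≤ s - (2*k - 2) := by linarith
      nlinarith [mul_nonneg hD hCc, mul_nonneg hA hB, mul_nonneg (by linarith : (0:ℝ) ≤ (k:ℝ)) (by linarith : (0:ℝ) ≤ (k:ℝ) - 2)]
  have hgood : ∃ K : Finset (Fin m), K.card = k ∧ ∀ ℓ, ∑ i ∈ K, w' ℓ i ≤ C := by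
    by_cases hL3 : 3 ≤ L
    · -- greedy construction for L ≥ 3
      have hlogL1 : 1 ≤ Real.log L := by
        rw [Real.le_log_iff_exp_le hL0]
        have h1 : Real.exp 1 < 3 := lt_trans Real.exp_one_lt_d9 (by norm_num)
        have h2 : (3:ℝ) ≤ L := by exact_mod_cast hL3
        linarith
      set γ : ℝ := (Real.exp 1 - 1) * Wmax / ((m:ℝ) - k + 1) with hγdef
      have hden : (0:ℝ) < (m:ℝ) - k + 1 := by linarith
      have hexp1 : (0:ℝ) ≤ Real.exp 1 - 1 := by
        have := Real.add_one_le_exp 1; linarith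
      have hγ0 : 0 ≤ γ :=
        div_nonneg (mul_nonneg hexp1 (le_of_lt hWmax0)) (le_of_lt hden)
      have hexpbound : ∀ x : ℝ, 0 ≤ x → x ≤ 1 →
          Real.exp x ≤ 1 + (Real.exp 1 - 1) * x := by
        intro x h0 h1
        have hcvx := convexOn_exp.2 (Set.mem_univ (0:ℝ)) (Set.mem_univ (1:ℝ))
          (by linarith : (0:ℝ) ≤ 1 - x) h0 (by ring)
        simp only [smul_eq_mul, mul_zero, mul_one, zero_add, Real.exp_zero] at hcvx
        linarith
      have hstep : ∀ K : Finset (Fin m), K.card < k →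
          ∃ i, i ∉ K ∧ ∑ ℓ, Real.exp (∑ x ∈ insert i K, w' ℓ x)
            ≤ Real.exp γ * ∑ ℓ, Real.exp (∑ x ∈ K, w' ℓ x) := by
        intro K hKk
        set R := (Finset.univ : Finset (Fin m)) \ K with hRdef
        have hRcard : R.card = m - K.card := by
          rw [hRdef, Finset.card_sdiff_of_subset (Finset.subset_univ K), Finset.card_univ,
            Fintype.card_fin]
        have hRpos : 0 < R.card := by omega
        have hRne : R.Nonempty := Finset.card_pos.1 hRpos
        have hRpos' : (0:ℝ) < R.card := by exact_mod_cast hRpos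
        have hRγ : (Real.exp 1 - 1) * Wmax / R.card ≤ γ := by
          rw [hγdef]
          have hcardge : (m:ℝ) - k + 1 ≤ R.card := by
            have : m - K.card ≥ m - (k-1) := by omega
            have h2 : ((m - K.card : ℕ):ℝ) ≥ ((m - (k-1) : ℕ):ℝ) := by exact_mod_cast this
            rw [hRcard]
            have h3 : ((m - (k-1) : ℕ):ℝ) = (m:ℝ) - k + 1 := by
              have hkm' : k - 1 ≤ m := by omega
              rw [Nat.cast_sub hkm']
              have : ((k - 1 : ℕ):ℝ) = (k:ℝ) - 1 := by
                rw [Nat.cast_sub hk1]; norm_num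
              rw [this]; ring
            linarith
          gcongr
        have hperℓ : ∀ ℓ, ∑ i ∈ R, Real.exp (w' ℓ i) ≤ (R.card : ℝ) * Real.exp γ := by
          intro ℓ
          have h1 : ∑ i ∈ R, Real.exp (w' ℓ i)
              ≤ ∑ i ∈ R, (1 + (Real.exp 1 - 1) * w' ℓ i) :=
            Finset.sum_le_sum (fun i _ => hexpbound _ (hw'0 ℓ i) (hw'1 ℓ i))
          have h2 : ∑ i ∈ R, (1 + (Real.exp 1 - 1) * w' ℓ i)
              = (R.card:ℝ) + (Real.exp 1 - 1) * ∑ i ∈ R, w' ℓ i := by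
            rw [Finset.sum_add_distrib, Finset.sum_const, ← Finset.mul_sum,
              nsmul_eq_mul, mul_one]
          have h3 : ∑ i ∈ R, w' ℓ i ≤ Wmax := by
            calc ∑ i ∈ R, w' ℓ i ≤ ∑ i, w' ℓ i :=
                Finset.sum_le_sum_of_subset_of_nonneg (Finset.subset_univ R)
                  (fun i _ _ => hw'0 ℓ i)
            _ = W ℓ := rfl
            _ ≤ Wmax := hWle ℓ
          have h3' : (Real.exp 1 - 1) * ∑ i ∈ R, w' ℓ i ≤ (Real.exp 1 - 1) * Wmax :=
            mul_le_mul_of_nonneg_left h3 hexp1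
          have h5 : 1 + (Real.exp 1 - 1) * Wmax / R.card ≤ Real.exp γ := by
            have := Real.add_one_le_exp γ
            linarith [hRγ]
          have h4 : (R.card:ℝ) + (Real.exp 1 - 1) * Wmax ≤ (R.card:ℝ) * Real.exp γ := by
            have heq : (R.card:ℝ) + (Real.exp 1 - 1) * Wmax
                = (R.card:ℝ) * (1 + (Real.exp 1 - 1) * Wmax / R.card) := by
              field_simp
            rw [heq]
            exact mul_le_mul_of_nonneg_left h5 (le_of_lt hRpos')
          linarith
        have htot : ∑ i ∈ R, (∑ ℓ, Real.exp (∑ x ∈ insert i K, w' ℓ x))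
            ≤ ∑ _i ∈ R, (Real.exp γ * ∑ ℓ, Real.exp (∑ x ∈ K, w' ℓ x)) := by
          rw [Finset.sum_comm]
          rw [Finset.sum_const, nsmul_eq_mul]
          have hinner : ∀ ℓ, ∑ i ∈ R, Real.exp (∑ x ∈ insert i K, w' ℓ x)
              ≤ (R.card:ℝ) * Real.exp γ * Real.exp (∑ x ∈ K, w' ℓ x) := by
            intro ℓ
            have heq : ∀ i ∈ R, Real.exp (∑ x ∈ insert i K, w' ℓ x)
                = Real.exp (w' ℓ i) * Real.exp (∑ x ∈ K, w' ℓ x) := by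
              intro i hi
              have hiK : i ∉ K := (Finset.mem_sdiff.1 hi).2
              rw [Finset.sum_insert hiK, Real.exp_add]
            rw [Finset.sum_congr rfl heq, ← Finset.sum_mul]
            exact mul_le_mul_of_nonneg_right (hperℓ ℓ) (le_of_lt (Real.exp_pos _))
          calc ∑ ℓ, ∑ i ∈ R, Real.exp (∑ x ∈ insert i K, w' ℓ x)
              ≤ ∑ ℓ, (R.card:ℝ) * Real.exp γ * Real.exp (∑ x ∈ K, w' ℓ x) :=
                Finset.sum_le_sum (fun ℓ _ => hinner ℓ)
          _ = (R.card:ℝ) * (Real.exp γ * ∑ ℓ, Real.exp (∑ x ∈ K, w' ℓ x)) := by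
                rw [Finset.mul_sum, Finset.mul_sum]
                apply Finset.sum_congr rfl; intro ℓ _; ring
        obtain ⟨i, hiR, hile⟩ := Finset.exists_le_of_sum_le hRne htot
        exact ⟨i, (Finset.mem_sdiff.1 hiR).2, hile⟩
      have hind : ∀ j : ℕ, j ≤ k → ∃ K : Finset (Fin m), K.card = j ∧
          ∑ ℓ, Real.exp (∑ x ∈ K, w' ℓ x) ≤ (L:ℝ) * Real.exp (j * γ) := by
        intro j
        induction j with
        | zero =>
          intro _
          refine ⟨∅, Finset.card_empty, ?_⟩
          simp
        | succ n ih =>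
          intro hle
          obtain ⟨K, hKc, hKΦ⟩ := ih (Nat.le_of_succ_le hle)
          obtain ⟨i, hiK, histep⟩ := hstep K (by omega)
          refine ⟨insert i K, by rw [Finset.card_insert_of_notMem hiK, hKc], ?_⟩
          calc ∑ ℓ, Real.exp (∑ x ∈ insert i K, w' ℓ x)
              ≤ Real.exp γ * ∑ ℓ, Real.exp (∑ x ∈ K, w' ℓ x) := histep
          _ ≤ Real.exp γ * ((L:ℝ) * Real.exp (n * γ)) :=
              mul_le_mul_of_nonneg_left hKΦ (le_of_lt (Real.exp_pos γ))
          _ = (L:ℝ) * Real.exp ((n+1 : ℕ) * γ) := by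
              rw [show ((n+1 : ℕ):ℝ) * γ = (n:ℝ) * γ + γ by push_cast; ring, Real.exp_add]
              ring
      obtain ⟨K, hKc, hKΦ⟩ := hind k le_rfl
      refine ⟨K, hKc, ?_⟩
      intro ℓ
      have h1 : Real.exp (∑ x ∈ K, w' ℓ x) ≤ (L:ℝ) * Real.exp (k * γ) := by
        refine le_trans ?_ hKΦ
        exact Finset.single_le_sum (f := fun ℓ' => Real.exp (∑ x ∈ K, w' ℓ' x))
          (fun ℓ' _ => le_of_lt (Real.exp_pos _)) (Finset.mem_univ ℓ)
      rw [show (L:ℝ) * Real.exp (k*γ) = Real.exp (Real.log L + k*γ) by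
        rw [Real.exp_add, Real.exp_log hL0]] at h1
      have h3 : ∑ x ∈ K, w' ℓ x ≤ Real.log L + k * γ := Real.exp_le_exp.1 h1
      have hWk : 2 * (k:ℝ) * Wmax ≤ 3 * ((m:ℝ) - k + 1) := by
        have e1 : 2*(k:ℝ)*Wmax * s = 2*(k:ℝ)*(m:ℝ) := by
          rw [show 2*(k:ℝ)*Wmax * s = 2*(k:ℝ)*(s * Wmax) by ring, hsWmax]
        have e2 : 2*(k:ℝ)*Wmax * s ≤ (3*((m:ℝ)-k+1)) * s := by
          rw [e1, show (3*((m:ℝ)-k+1)) * s = 3 * s * ((m:ℝ) - k + 1) by ring]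
          exact harith
        exact le_of_mul_le_mul_right e2 hs0
      have hkγ : (k:ℝ) * γ ≤ 3 := by
        rw [hγdef, show (k:ℝ) * ((Real.exp 1 - 1) * Wmax / ((m:ℝ) - k + 1))
            = ((k:ℝ) * ((Real.exp 1 - 1) * Wmax)) / ((m:ℝ) - k + 1) by ring]
        rw [div_le_iff₀ hden]
        have he3 : Real.exp 1 ≤ 3 := le_of_lt (lt_trans Real.exp_one_lt_d9 (by norm_num))
        have hkW0 : (0:ℝ) ≤ (k:ℝ) * Wmax := mul_nonneg (by linarith) (le_of_lt hWmax0)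
        nlinarith [hWk]
      rw [hCdef]
      linarith
    · -- L = 2 : deterministic averaging
      have hLcast : (L:ℝ) = 2 := by
        have : L = 2 := by omega
        rw [this]; norm_num
      obtain ⟨K, hKc, hKmin⟩ := exists_min_exchange (fun i => ∑ ℓ, w' ℓ i) k
          (by simpa [Fintype.card_fin] using hkm)
      refine ⟨K, hKc, ?_⟩
      set v : Fin m → ℝ := fun i => ∑ ℓ, w' ℓ i with hvdef
      have hout : ∀ j ∈ Finset.univ \ K, ∑ i ∈ K, v i ≤ (k:ℝ) * v j := by
        intro j hj
        have hjK : j ∉ K := (Finset.mem_sdiff.1 hj).2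
        calc ∑ i ∈ K, v i ≤ ∑ _i ∈ K, v j :=
              Finset.sum_le_sum (fun i hi => hKmin i hi j hjK)
        _ = (k:ℝ) * v j := by rw [Finset.sum_const, hKc, nsmul_eq_mul]
      have hcard : ((Finset.univ : Finset (Fin m)) \ K).card = m - k := by
        rw [Finset.card_sdiff_of_subset (Finset.subset_univ K), Finset.card_univ,
          Fintype.card_fin, hKc]
      have hcount : ((m:ℝ) - k) * ∑ i ∈ K, v i
          ≤ (k:ℝ) * ∑ j ∈ Finset.univ \ K, v j := by
        have h1 : ∑ _j ∈ Finset.univ \ K, (∑ i ∈ K, v i)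
            ≤ ∑ j ∈ Finset.univ \ K, (k:ℝ) * v j := Finset.sum_le_sum hout
        rw [Finset.sum_const, hcard, nsmul_eq_mul, ← Finset.mul_sum] at h1
        have hc : ((m - k : ℕ):ℝ) = (m:ℝ) - k := by rw [Nat.cast_sub hkm]
        rw [hc] at h1; exact h1
      have hsplitv : ∑ j ∈ Finset.univ \ K, v j + ∑ i ∈ K, v i = ∑ i, v i :=
        Finset.sum_sdiff (Finset.subset_univ K)
      have htotv : ∑ i, v i ≤ 2 * Wmax := by
        have hcomm : ∑ i, v i = ∑ ℓ, W ℓ := by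
          rw [hvdef, hWdef]
          exact Finset.sum_comm
        rw [hcomm]
        calc ∑ ℓ, W ℓ ≤ ∑ _ℓ : Fin L, Wmax := Finset.sum_le_sum (fun ℓ _ => hWle ℓ)
        _ = (L:ℝ) * Wmax := by
            rw [Finset.sum_const, Finset.card_univ, Fintype.card_fin, nsmul_eq_mul]
        _ = 2 * Wmax := by rw [hLcast]
      have hKv2 : ∑ i ∈ K, v i ≤ 2 := by
        have e : (k:ℝ) * ∑ j ∈ Finset.univ \ K, v j + (k:ℝ) * ∑ i ∈ K, v i
            = (k:ℝ) * ∑ i, v i := by rw [← mul_add, hsplitv]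
        have h1 : (m:ℝ) * ∑ i ∈ K, v i ≤ (k:ℝ) * ∑ i, v i := by linarith
        have h2 : (k:ℝ) * ∑ i, v i ≤ (k:ℝ) * (2*Wmax) :=
          mul_le_mul_of_nonneg_left htotv (by linarith)
        have h3 : (k:ℝ) * (2*Wmax) ≤ s * (2*Wmax) :=
          mul_le_mul_of_nonneg_right hks (by linarith)
        have h4 : s * (2*Wmax) = 2 * m := by
          rw [show s * (2*Wmax) = 2*(s*Wmax) by ring, hsWmax]
        have h5 : (m:ℝ) * ∑ i ∈ K, v i ≤ (m:ℝ) * 2 := by linarith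
        exact le_of_mul_le_mul_left h5 hm0
      intro ℓ
      have hwle : ∑ i ∈ K, w' ℓ i ≤ ∑ i ∈ K, v i := by
        apply Finset.sum_le_sum
        intro i _
        exact Finset.single_le_sum (fun ℓ' _ => hw'0 ℓ' i) (Finset.mem_univ ℓ)
      linarith
  -- transfer to all k-subsets
  have hβ : ∀ T : Finset (Fin m), T.card = k → ∀ ℓ, ∑ i ∈ T, w' ℓ i ≤ C := by
    obtain ⟨K, hKc, hKgood⟩ := hgood
    have hite : ∀ (ℓ : Fin L) (T : Finset (Fin m)),
        ∑ i, w' ℓ i * (if i ∈ T then 1/C else 0) = (∑ i ∈ T, w' ℓ i) * (1/C) := by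
      intro ℓ T
      rw [Finset.sum_mul]
      rw [show (∑ i, w' ℓ i * (if i ∈ T then 1/C else 0))
          = ∑ i : Fin m, if i ∈ T then w' ℓ i * (1/C) else 0 by
        apply Finset.sum_congr rfl; intro i _
        by_cases hiT : i ∈ T <;> simp [hiT]]
      rw [Finset.sum_ite_mem, Finset.univ_inter]
    have hβK : (fun i => if i ∈ K then 1/C else 0) ∈ U := by
      rw [hmemU]
      constructor
      · intro i
        by_cases hiK : i ∈ K <;> simp only [hiK, if_true, if_false]
        · constructor
          · positivity
          · rw [div_le_one hC0]; linarith
        · norm_num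
      · intro ℓ
        rw [hite ℓ K]
        have := hKgood ℓ
        calc (∑ i ∈ K, w' ℓ i) * (1/C) ≤ C * (1/C) := by
              apply mul_le_mul_of_nonneg_right this (by positivity)
        _ = 1 := by field_simp
    intro T hT ℓ
    have e := Finset.equivOfCardEq (hT.trans hKc.symm)
    have hmem := hperm _ hβK e.extendSubtype
    have hiff : ∀ i : Fin m, (e.extendSubtype i ∈ K) ↔ (i ∈ T) := by
      intro i
      constructor
      · intro hik
        by_contra hit
        exact (Equiv.extendSubtype_not_mem e i hit) hik
      · exact fun hit => Equiv.extendSubtype_mem e i hit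
    have hfun : (fun i => if e.extendSubtype i ∈ K then 1/C else 0)
        = (fun i => if i ∈ T then 1/C else 0) := by
      funext i
      simp [hiff i]
    rw [show (fun i => (fun j => if j ∈ K then 1/C else 0) (e.extendSubtype i))
        = (fun i => if i ∈ T then 1/C else 0) from hfun] at hmem
    have hcon := ((hmemU _).1 hmem).2 ℓ
    rw [hite ℓ T] at hcon
    have hCne : C ≠ 0 := ne_of_gt hC0
    calc ∑ i ∈ T, w' ℓ i = ((∑ i ∈ T, w' ℓ i) * (1/C)) * C := by field_simp
    _ ≤ 1 * C := by apply mul_le_mul_of_nonneg_right hcon (le_of_lt hC0)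
    _ = C := one_mul C
  -- fractional bound
  have hfrac : ∀ (ℓ : Fin L) (v : Fin m → ℝ), (∀ i, 0 ≤ v i ∧ v i ≤ 1) →
      (∑ i, v i) ≤ s/2 → ∑ i, w' ℓ i * v i ≤ C := by
    intro ℓ v hv hvs
    obtain ⟨T, hTc, hText⟩ := exists_min_exchange (fun i => -(w' ℓ i)) k
        (by simpa [Fintype.card_fin] using hkm)
    have hTw : ∀ i ∈ T, ∀ j, j ∉ T → w' ℓ j ≤ w' ℓ i := by
      intro i hi j hj; have := hText i hi j hj; simpa using this
    have hTC := hβ T hTc ℓ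
    by_cases hne : ((Finset.univ : Finset (Fin m)) \ T).Nonempty
    · obtain ⟨j₀, hj₀mem, hj₀max⟩ := Finset.exists_max_image _ (w' ℓ) hne
      have hj₀T : j₀ ∉ T := (Finset.mem_sdiff.1 hj₀mem).2
      set θ := w' ℓ j₀ with hθdef
      have hθ0 : 0 ≤ θ := hw'0 ℓ j₀
      have hθT : ∀ i ∈ T, θ ≤ w' ℓ i := fun i hi => hTw i hi j₀ hj₀T
      have hsplit : ∑ i ∈ Finset.univ \ T, w' ℓ i * v i + ∑ i ∈ T, w' ℓ i * v i
          = ∑ i, w' ℓ i * v i :=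
        Finset.sum_sdiff (Finset.subset_univ T)
      have hb1 : ∑ i ∈ T, w' ℓ i * v i
          ≤ (∑ i ∈ T, w' ℓ i) - θ * k + θ * ∑ i ∈ T, v i := by
        have hterm : ∀ i ∈ T, w' ℓ i * v i ≤ (w' ℓ i - θ) + θ * v i := by
          intro i hi
          nlinarith [(hv i).1, (hv i).2, hθT i hi]
        calc ∑ i ∈ T, w' ℓ i * v i ≤ ∑ i ∈ T, ((w' ℓ i - θ) + θ * v i) :=
              Finset.sum_le_sum hterm
        _ = (∑ i ∈ T, w' ℓ i) - θ * k + θ * ∑ i ∈ T, v i := by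
              rw [Finset.sum_add_distrib, Finset.sum_sub_distrib, Finset.sum_const, hTc,
                ← Finset.mul_sum, nsmul_eq_mul]
              ring
      have hb2 : ∑ i ∈ Finset.univ \ T, w' ℓ i * v i
          ≤ θ * ∑ i ∈ Finset.univ \ T, v i := by
        rw [Finset.mul_sum]
        apply Finset.sum_le_sum
        intro j hj
        nlinarith [(hv j).1, hj₀max j hj, hw'0 ℓ j]
      have hsum_parts : ∑ i ∈ Finset.univ \ T, v i + ∑ i ∈ T, v i = ∑ i, v i :=
        Finset.sum_sdiff (Finset.subset_univ T)
      have hvk : ∑ i, v i ≤ (k:ℝ) := le_trans hvs htk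
      have hθk : θ * (∑ i, v i) ≤ θ * k := mul_le_mul_of_nonneg_left hvk hθ0
      have hdistrib : θ * ∑ i ∈ Finset.univ \ T, v i + θ * ∑ i ∈ T, v i
          = θ * ∑ i, v i := by rw [← mul_add, hsum_parts]
      linarith
    · have hTuniv : T = Finset.univ := by
        rw [Finset.not_nonempty_iff_eq_empty, Finset.sdiff_eq_empty_iff_subset] at hne
        exact Finset.eq_univ_of_forall (fun x => hne (Finset.mem_univ x))
      have hb : ∑ i, w' ℓ i * v i ≤ ∑ i, w' ℓ i := by
        apply Finset.sum_le_sum; intro i _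
        nlinarith [(hv i).1, (hv i).2, hw'0 ℓ i]
      rw [hTuniv] at hTC
      linarith
  -- assemble
  refine ⟨s/2, by positivity, ?_, ?_⟩
  · intro x hx
    rw [Set.mem_smul_set] at hx
    obtain ⟨v, hv, rfl⟩ := hx
    rw [Set.mem_setOf_eq] at hv
    rw [hmemU]
    constructor
    · intro i
      simp only [Pi.smul_apply, smul_eq_mul]
      have := hv.1 i
      constructor
      · have : 0 ≤ 1/C := by positivity
        nlinarith [hv.1 i |>.1]
      · have h1 : 1/C ≤ 1 := by
          rw [div_le_one hC0]; linarith
        nlinarith [hv.1 i |>.2, hv.1 i |>.1]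
    · intro ℓ
      have heq : ∑ i, w' ℓ i * ((1/C) • v) i = (1/C) * ∑ i, w' ℓ i * v i := by
        rw [Finset.mul_sum]
        apply Finset.sum_congr rfl; intro i _
        simp only [Pi.smul_apply, smul_eq_mul]; ring
      rw [heq]
      have := hfrac ℓ v hv.1 hv.2
      calc (1/C) * ∑ i, w' ℓ i * v i ≤ (1/C) * C := by
            apply mul_le_mul_of_nonneg_left this (by positivity)
      _ = 1 := by field_simp
  · intro h hh
    rw [Set.mem_smul_set]
    refine ⟨fun i => h i / 2, ?_, ?_⟩
    · rw [Set.mem_setOf_eq]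
      refine ⟨fun i => ?_, ?_⟩
      · have := ((hmemU h).1 hh).1 i
        constructor <;> [linarith [this.1]; linarith [this.2]]
      · rw [← Finset.sum_div]
        have := hsum_le_s h hh
        linarith
    · funext i
      simp only [Pi.smul_apply, smul_eq_mul]; ring
end

section
/- Let p ≥ 1 and set m = 2p, J_1 = {1,…,p}, J_2 = {p+1,…,2p}, and U = { h ∈ [0,1]^m : Σ_{i=1}^m h_i ≤ p }. For a first-stage vector x ∈ [0,1]^m and a recourse vector y ∈ ℝ^{J_1 × J_2} with y ≥ 0, say that (x, y) covers a demand h ∈ [0,1]^m if x_j + Σ_{i ∈ J_1} y_{i j} ≥ h_j for every j ∈ J_2 and x_i − Σ_{j ∈ J_2} y_{i j} ≥ h_i for every i ∈ J_1. Define the adjustable value z_AR = inf { Σ_{j ∈ J_2} x_j : x ∈ [0,1]^m, and there exists y : U → ℝ^{J_1 × J_2} with y(h) ≥ 0 such that (x, y(h)) covers h for every h ∈ U }, and the affine value z_Aff defined as the same infimum with y restricted to affine functions of h, i.e., y(h) = P h + q for some P ∈ ℝ^{(J_1 × J_2) × m} and q ∈ ℝ^{J_1 × J_2} with P h + q ≥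 0 for all h ∈ U. Then z_AR = 0 and z_Aff = p − 1; in particular the ratio between the optimal affine policy value and the optimal adjustable value is unbounded as p → ∞. -/
/-- Demand nodes and supply nodes of the bipartite lot-sizing instance: indices in
`Sum.inl` form `J₁` (supply, zero inventory cost) and indices in `Sum.inr` form `J₂`
(demand, unit inventory cost). -/
abbrev LotNode (p : ℕ) := Sum (Fin p) (Fin p)

/-- The budget of uncertainty set with budget `p` on `[0,1]^{2p}`. -/
def LotU (p : ℕ) : Set (LotNode p → ℝ) :=
  { h | (∀ k, 0 ≤ h k ∧ h k ≤ 1) ∧ ∑ k, h k ≤ (p : ℝ) }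

/-- `(x, y)` covers demand `h`: each node of `J₂` is covered by its inventory plus inflow
from `J₁`, and each node of `J₁` by its inventory minus outflow. -/
def LotCovers (p : ℕ) (x : LotNode p → ℝ) (y : Fin p → Fin p → ℝ)
    (h : LotNode p → ℝ) : Prop :=
  (∀ j : Fin p, h (Sum.inr j) ≤ x (Sum.inr j) + ∑ i, y i j) ∧
  (∀ i : Fin p, h (Sum.inl i) ≤ x (Sum.inl i) - ∑ j, y i j)

/-- Adjustable robust value of the lot-sizing instance: minimal total inventory placed on
`J₂` over fully adjustable nonnegative recourse. -/
noncomputable def lotZAR (p : ℕ) : ℝ :=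
  sInf { t : ℝ | ∃ x : LotNode p → ℝ, (∀ k, 0 ≤ x k ∧ x k ≤ 1) ∧
    (∃ y : (LotNode p → ℝ) → Fin p → Fin p → ℝ,
      (∀ h ∈ LotU p, ∀ i j, 0 ≤ y h i j) ∧
      (∀ h ∈ LotU p, LotCovers p x (y h) h)) ∧
    t = ∑ j : Fin p, x (Sum.inr j) }

/-- Affine-policy value of the lot-sizing instance: same as `lotZAR` but with the recourse
restricted to affine functions `y(h) = P h + q` that are nonnegative on the uncertainty
set. -/
noncomputable def lotZAff (p : ℕ) : ℝ :=
  sInf { t : ℝ | ∃ x : LotNode p → ℝ, (∀ k, 0 ≤ x k ∧ x k ≤ 1) ∧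
    (∃ (P : Fin p → Fin p → (LotNode p → ℝ)) (q : Fin p → Fin p → ℝ),
      (∀ h ∈ LotU p, ∀ i j, 0 ≤ (∑ k, P i j k * h k) + q i j) ∧
      (∀ h ∈ LotU p, LotCovers p x (fun i j => (∑ k, P i j k * h k) + q i j) h)) ∧
    t = ∑ j : Fin p, x (Sum.inr j) }

/- ### Auxiliary material -/

lemma lot_sum_split {p : ℕ} (f : LotNode p → ℝ) :
    ∑ k, f k = ∑ i, f (Sum.inl i) + ∑ j, f (Sum.inr j) :=
  Fintype.sum_sum_type f

/-- 0/1 vector supported on a finite set of nodes. -/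
noncomputable def lotInd {p : ℕ} (s : Finset (LotNode p)) : LotNode p → ℝ :=
  fun k => if k ∈ s then 1 else 0

lemma lotInd_mem {p : ℕ} (s : Finset (LotNode p)) (hc : s.card ≤ p) :
    lotInd s ∈ LotU p := by
  constructor
  · intro k
    by_cases h : k ∈ s <;> simp [lotInd, h]
  · have : ∑ k, lotInd s k = (s.card : ℝ) := by
      simp [lotInd, Finset.sum_ite_mem, Finset.univ_inter]
    rw [this]
    exact_mod_cast hc

lemma lotInd_dot {p : ℕ} (s : Finset (LotNode p)) (f : LotNode p → ℝ) :
    ∑ k, f k * lotInd s k = ∑ k ∈ s, f k := by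
  simp [lotInd, mul_ite, mul_one, mul_zero, Finset.sum_ite_mem, Finset.univ_inter]

/-- If supply node `i` is fully blocked (`h (inl i) = 1`), any feasible recourse
(nonnegative, covering) ships nothing out of `i`. -/
lemma lot_force {p : ℕ} (x : LotNode p → ℝ) (y : Fin p → Fin p → ℝ)
    (h : LotNode p → ℝ) (i : Fin p)
    (hx : x (Sum.inl i) ≤ 1) (h1 : h (Sum.inl i) = 1)
    (hnn : ∀ i' j', 0 ≤ y i' j') (hcov : LotCovers p x y h) :
    ∀ j, y i j = 0 := by
  have hs := hcov.2 i
  rw [h1] at hs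
  have hsum0 : ∑ j, y i j ≤ 0 := by linarith
  have hz : ∑ j, y i j = 0 :=
    le_antisymm hsum0 (Finset.sum_nonneg fun j _ => hnn i j)
  intro j
  have := (Finset.sum_eq_zero_iff_of_nonneg (fun j _ => hnn i j)).mp hz j (Finset.mem_univ j)
  exact this

/-- Lower bound for the affine value when `p ≥ 2`. -/
lemma lot_aff_lower {p : ℕ} (hp : 2 ≤ p)
    (x : LotNode p → ℝ) (hx : ∀ k, 0 ≤ x k ∧ x k ≤ 1)
    (P : Fin p → Fin p → (LotNode p → ℝ)) (q : Fin p → Fin p → ℝ)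
    (hnn : ∀ h ∈ LotU p, ∀ i j, 0 ≤ (∑ k, P i j k * h k) + q i j)
    (hcov : ∀ h ∈ LotU p, LotCovers p x (fun i j => (∑ k, P i j k * h k) + q i j) h) :
    (p : ℝ) - 1 ≤ ∑ j : Fin p, x (Sum.inr j) := by
  have hp1 : 1 ≤ p := le_trans (by norm_num) hp
  -- forcing at an indicator point with inl i in the support
  have force : ∀ (s : Finset (LotNode p)), s.card ≤ p → ∀ i : Fin p, Sum.inl i ∈ s →
      ∀ j, (∑ k ∈ s, P i j k) + q i j = 0 := by
    intro s hs i hi j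
    have hmem := lotInd_mem s hs
    have := lot_force x (fun i j => (∑ k, P i j k * lotInd s k) + q i j) (lotInd s) i
      (hx _).2 (by simp [lotInd, hi]) (fun i' j' => hnn _ hmem i' j') (hcov _ hmem) j
    rwa [lotInd_dot] at this
  -- coefficient facts
  have factA : ∀ i j, P i j (Sum.inl i) + q i j = 0 := by
    intro i j
    have := force {Sum.inl i} (by simp; omega) i (by simp) j
    simpa using this
  have factB : ∀ i j, P i j (Sum.inr j) = 0 := by
    intro i j
    have h2 : ({Sum.inl i, Sum.inr j} : Finset (LotNode p)).card ≤ p := by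
      have : ({Sum.inl i, Sum.inr j} : Finset (LotNode p)).card ≤ 2 :=
        Finset.card_insert_le _ _ |>.trans (by simp)
      omega
    have := force {Sum.inl i, Sum.inr j} h2 i (by simp) j
    rw [Finset.sum_pair (by simp)] at this
    have hA := factA i j
    linarith
  have factC : ∀ i j i', i' ≠ i → P i j (Sum.inl i') = 0 := by
    intro i j i' hne
    have h2 : ({Sum.inl i, Sum.inl i'} : Finset (LotNode p)).card ≤ p := by
      have : ({Sum.inl i, Sum.inl i'} : Finset (LotNode p)).card ≤ 2 :=
        Finset.card_insert_le _ _ |>.trans (by simp)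
      omega
    have := force {Sum.inl i, Sum.inl i'} h2 i (by simp) j
    rw [Finset.sum_pair (by simp [Ne.symm hne])] at this
    have hA := factA i j
    linarith
  -- key demand inequality: for all i j, 1 ≤ x (inr j) + q i j
  have key1 : ∀ i j, (1 : ℝ) ≤ x (Sum.inr j) + q i j := by
    intro i j
    -- the point: demand 1 at node j, all supply nodes except i blocked
    set s : Finset (LotNode p) :=
      insert (Sum.inr j) ((Finset.univ.erase i).image Sum.inl) with hs_def
    have hcard : s.card ≤ p := by
      rw [hs_def]
      have h1 : ((Finset.univ.erase i).image (Sum.inl : Fin p → LotNode p)).card = p - 1 := by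
        rw [Finset.card_image_of_injective _ Sum.inl_injective,
          Finset.card_erase_of_mem (Finset.mem_univ i), Finset.card_univ, Fintype.card_fin]
      have := Finset.card_insert_le (Sum.inr j : LotNode p)
        ((Finset.univ.erase i).image Sum.inl)
      omega
    have hmem := lotInd_mem s hcard
    have hinr : lotInd s (Sum.inr j) = 1 := by simp [lotInd, hs_def]
    -- forcing at all blocked supply nodes i' ≠ i
    have hforce : ∀ i', i' ≠ i →
        (∑ k, P i' j k * lotInd s k) + q i' j = 0 := by
      intro i' hne
      have h1 : lotInd s (Sum.inl i') = 1 := by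
        simp [lotInd, hs_def, Finset.mem_insert, hne]
      exact lot_force x (fun a b => (∑ k, P a b k * lotInd s k) + q a b) (lotInd s) i'
        (hx _).2 h1 (fun a b => hnn _ hmem a b) (hcov _ hmem) j
    -- at the surviving supply node i, the affine recourse equals q i j
    have hsurv : (∑ k, P i j k * lotInd s k) + q i j = q i j := by
      have hz : ∑ k, P i j k * lotInd s k = 0 := by
        rw [lotInd_dot]
        apply Finset.sum_eq_zero
        intro k hk
        rw [hs_def] at hk
        rcases Finset.mem_insert.mp hk with hk | hk
        · subst hk; exact factB i j
        · rcases Finset.mem_image.mp hk with ⟨i', hi', rfl⟩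
          exact factC i j i' (Finset.ne_of_mem_erase hi')
      rw [hz, zero_add]
    have hdem := (hcov _ hmem).1 j
    rw [hinr] at hdem
    have hsum : ∑ i', ((∑ k, P i' j k * lotInd s k) + q i' j) = q i j := by
      rw [Finset.sum_eq_single i]
      · exact hsurv
      · intro i' _ hne; exact hforce i' hne
      · intro hni; exact absurd (Finset.mem_univ i) hni
    rw [hsum] at hdem
    exact hdem
  -- supply at h = 0 : the row sums of q are at most 1
  have key2 : ∀ i, ∑ j, q i j ≤ 1 := by
    intro i
    have hmem : lotInd (∅ : Finset (LotNode p)) ∈ LotU p := lotInd_mem ∅ (by simp)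
    have hs := (hcov _ hmem).2 i
    have h0 : lotInd (∅ : Finset (LotNode p)) (Sum.inl i) = 0 := by simp [lotInd]
    rw [h0] at hs
    have hq : ∀ j', (∑ k, P i j' k * lotInd (∅ : Finset (LotNode p)) k) + q i j' = q i j' := by
      intro j'; rw [lotInd_dot]; simp
    rw [Finset.sum_congr rfl (fun j' _ => hq j')] at hs
    have := (hx (Sum.inl i)).2
    linarith
  -- combine
  have hbig : (p : ℝ) * p ≤ (p : ℝ) * (∑ j, x (Sum.inr j)) + p := by
    have h1 : (p : ℝ) * p = ∑ _i : Fin p, ∑ _j : Fin p, (1 : ℝ) := by simp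
    have h2 : ∑ i : Fin p, ∑ j : Fin p, (1 : ℝ) ≤
        ∑ i : Fin p, ∑ j : Fin p, (x (Sum.inr j) + q i j) := by
      apply Finset.sum_le_sum; intro i _
      apply Finset.sum_le_sum; intro j _
      exact key1 i j
    have h3 : ∑ i : Fin p, ∑ j : Fin p, (x (Sum.inr j) + q i j)
        = (p : ℝ) * (∑ j, x (Sum.inr j)) + ∑ i : Fin p, ∑ j, q i j := by
      simp [Finset.sum_add_distrib]
    have h4 : ∑ i : Fin p, ∑ j, q i j ≤ ∑ _i : Fin p, (1 : ℝ) :=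
      Finset.sum_le_sum fun i _ => key2 i
    have h5 : ∑ _i : Fin p, (1 : ℝ) = (p : ℝ) := by simp
    calc (p : ℝ) * p = ∑ _i : Fin p, ∑ _j : Fin p, (1 : ℝ) := h1
      _ ≤ ∑ i : Fin p, ∑ j : Fin p, (x (Sum.inr j) + q i j) := h2
      _ = (p : ℝ) * (∑ j, x (Sum.inr j)) + ∑ i : Fin p, ∑ j, q i j := h3
      _ ≤ (p : ℝ) * (∑ j, x (Sum.inr j)) + p := by linarith
  have hppos : (0 : ℝ) < p := by exact_mod_cast hp1
  nlinarith [hbig, hppos]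

lemma lot_csInf_eq {S : Set ℝ} {a : ℝ} (h1 : a ∈ S) (h2 : ∀ t ∈ S, a ≤ t) :
    sInf S = a :=
  le_antisymm (csInf_le ⟨a, h2⟩ h1) (le_csInf ⟨a, h1⟩ h2)

/-- For the two-stage robust lot-sizing instance on a bipartite network with `p` supply and
`p` demand nodes and budget `p`, the optimal adjustable value is `0` while the optimal
affine value is `p − 1`: the gap between affine and adjustable policies is unbounded. -/
theorem lot_sizing_affine_gap_unbounded (p : ℕ) (hp : 1 ≤ p) :
    lotZAR p = 0 ∧ lotZAff p = (p : ℝ) - 1 := by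
  have hppos : (0 : ℝ) < p := by exact_mod_cast hp
  have hpne : (p : ℝ) ≠ 0 := ne_of_gt hppos
  constructor
  · -- adjustable value is 0
    unfold lotZAR
    apply lot_csInf_eq
    · -- membership: x = indicator of supply nodes, proportional routing
      refine ⟨Sum.elim (fun _ => (1 : ℝ)) (fun _ => (0 : ℝ)), ?_,
        ⟨⟨fun h i j => (1 - h (Sum.inl i)) * h (Sum.inr j) /
            ((p : ℝ) - ∑ i', h (Sum.inl i')), ?_, ?_⟩, ?_⟩⟩
      · rintro (i | j) <;> norm_num
      · -- nonnegativity
        rintro h ⟨hb, hsum⟩ i j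
        have hS : ∑ i', h (Sum.inl i') + ∑ j', h (Sum.inr j') ≤ (p : ℝ) := by
          rw [← lot_sum_split]; exact hsum
        have hD : 0 ≤ ∑ j', h (Sum.inr j') :=
          Finset.sum_nonneg fun j' _ => (hb _).1
        exact div_nonneg (mul_nonneg (by linarith [(hb (Sum.inl i)).2]) (hb _).1)
          (by linarith)
      · -- covering
        rintro h ⟨hb, hsum⟩
        have hS : ∑ i', h (Sum.inl i') + ∑ j', h (Sum.inr j') ≤ (p : ℝ) := by
          rw [← lot_sum_split]; exact hsum
        have hD : 0 ≤ ∑ j', h (Sum.inr j') :=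
          Finset.sum_nonneg fun j' _ => (hb _).1
        constructor
        · intro j
          simp only [Sum.elim_inr, zero_add]
          have hterm : ∀ i : Fin p, (1 - h (Sum.inl i)) * h (Sum.inr j) /
              ((p : ℝ) - ∑ i', h (Sum.inl i'))
              = (1 - h (Sum.inl i)) *
                (h (Sum.inr j) / ((p : ℝ) - ∑ i', h (Sum.inl i'))) :=
            fun i => mul_div_assoc _ _ _
          rw [Finset.sum_congr rfl fun i _ => hterm i, ← Finset.sum_mul,
            Finset.sum_sub_distrib, Finset.sum_const, Finset.card_univ,
            Fintype.card_fin, nsmul_eq_mul, mul_one]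
          by_cases hc : (p : ℝ) - ∑ i', h (Sum.inl i') = 0
          · rw [hc]
            have hj : h (Sum.inr j) ≤ ∑ j', h (Sum.inr j') :=
              Finset.single_le_sum (fun j' _ => (hb _).1) (Finset.mem_univ j)
            have : ∑ j', h (Sum.inr j') ≤ 0 := by linarith
            simp only [zero_mul]
            linarith
          · have : ((p : ℝ) - ∑ i', h (Sum.inl i')) *
                (h (Sum.inr j) / ((p : ℝ) - ∑ i', h (Sum.inl i'))) = h (Sum.inr j) := by
              field_simp
            rw [this]
        · intro i
          simp only [Sum.elim_inl]
          have hterm : ∀ j : Fin p, (1 - h (Sum.inl i)) * h (Sum.inr j) /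
              ((p : ℝ) - ∑ i', h (Sum.inl i'))
              = ((1 - h (Sum.inl i)) / ((p : ℝ) - ∑ i', h (Sum.inl i'))) *
                h (Sum.inr j) := fun j => by ring
          rw [Finset.sum_congr rfl fun j _ => hterm j, ← Finset.mul_sum]
          by_cases hc : (p : ℝ) - ∑ i', h (Sum.inl i') = 0
          · rw [hc]
            simp only [div_zero, zero_mul]
            linarith [(hb (Sum.inl i)).2]
          · have hcpos : 0 < (p : ℝ) - ∑ i', h (Sum.inl i') :=
              lt_of_le_of_ne (by linarith) (Ne.symm hc)
            have hq : 0 ≤ (1 - h (Sum.inl i)) / ((p : ℝ) - ∑ i', h (Sum.inl i')) :=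
              div_nonneg (by linarith [(hb (Sum.inl i)).2]) hcpos.le
            have hDle : ∑ j', h (Sum.inr j') ≤ (p : ℝ) - ∑ i', h (Sum.inl i') := by
              linarith
            have h1 : ((1 - h (Sum.inl i)) / ((p : ℝ) - ∑ i', h (Sum.inl i'))) *
                (∑ j', h (Sum.inr j'))
                ≤ ((1 - h (Sum.inl i)) / ((p : ℝ) - ∑ i', h (Sum.inl i'))) *
                  ((p : ℝ) - ∑ i', h (Sum.inl i')) :=
              mul_le_mul_of_nonneg_left hDle hq
            have h2 : ((1 - h (Sum.inl i)) / ((p : ℝ) - ∑ i', h (Sum.inl i'))) *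
                ((p : ℝ) - ∑ i', h (Sum.inl i')) = 1 - h (Sum.inl i) :=
              div_mul_cancel₀ _ hc
            linarith
      · simp
    · -- lower bound: all feasible values are nonnegative
      rintro t ⟨x, hx, -, rfl⟩
      exact Finset.sum_nonneg fun j _ => (hx _).1
  · -- affine value is p - 1
    unfold lotZAff
    apply lot_csInf_eq
    · -- membership: the affine policy y i j (h) = (1 - h(inl i))/p
      refine ⟨Sum.elim (fun _ => (1 : ℝ)) (fun _ => ((p : ℝ) - 1) / p), ?_,
        ⟨⟨fun i j => fun k => if k = Sum.inl i then -(1 / (p : ℝ)) else 0,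
          fun i j => 1 / (p : ℝ), ?_, ?_⟩, ?_⟩⟩
      · rintro (i | j)
        · norm_num
        · simp only [Sum.elim_inr]
          constructor
          · apply div_nonneg _ hppos.le
            have : (1 : ℝ) ≤ p := by exact_mod_cast hp
            linarith
          · rw [div_le_one hppos]; linarith
      · -- nonnegativity of the affine recourse on U
        rintro h ⟨hb, hsum⟩ i j
        have hdot : ∑ k, (if k = Sum.inl i then -(1 / (p : ℝ)) else 0) * h k
            = -(1 / (p : ℝ)) * h (Sum.inl i) := by
          rw [Finset.sum_congr rfl (fun k _ => by
            split <;> simp : ∀ k ∈ Finset.univ,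
              (if k = Sum.inl i then -(1 / (p : ℝ)) else 0) * h k
              = if k = Sum.inl i then -(1 / (p : ℝ)) * h k else 0)]
          simp [Finset.sum_ite_eq']
        rw [hdot]
        have h1 : h (Sum.inl i) ≤ 1 := (hb _).2
        have : -(1 / (p : ℝ)) * h (Sum.inl i) + 1 / p = (1 - h (Sum.inl i)) / p := by
          ring
        rw [this]
        exact div_nonneg (by linarith) hppos.le
      · -- covering
        rintro h ⟨hb, hsum⟩
        have hdot : ∀ i j : Fin p,
            (∑ k, (if k = Sum.inl i then -(1 / (p : ℝ)) else 0) * h k) + 1 / p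
            = -(1 / (p : ℝ)) * h (Sum.inl i) + 1 / p := by
          intro i j
          congr 1
          rw [Finset.sum_congr rfl (fun k _ => by
            split <;> simp : ∀ k ∈ Finset.univ,
              (if k = Sum.inl i then -(1 / (p : ℝ)) else 0) * h k
              = if k = Sum.inl i then -(1 / (p : ℝ)) * h k else 0)]
          simp [Finset.sum_ite_eq']
        have hS : ∑ i', h (Sum.inl i') + ∑ j', h (Sum.inr j') ≤ (p : ℝ) := by
          rw [← lot_sum_split]; exact hsum
        constructor
        · intro j
          simp only [Sum.elim_inr]
          rw [Finset.sum_congr rfl fun i _ => hdot i j, Finset.sum_add_distrib,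
            ← Finset.mul_sum, Finset.sum_const, Finset.card_univ, Fintype.card_fin,
            nsmul_eq_mul]
          have hj1 : h (Sum.inr j) ≤ 1 := (hb _).2
          have hjD : h (Sum.inr j) ≤ ∑ j', h (Sum.inr j') :=
            Finset.single_le_sum (fun j' _ => (hb _).1) (Finset.mem_univ j)
          have hS0 : 0 ≤ ∑ i', h (Sum.inl i') :=
            Finset.sum_nonneg fun i' _ => (hb _).1
          have heq : ((p : ℝ) - 1) / p + (-(1 / (p : ℝ)) *
              (∑ i', h (Sum.inl i')) + (p : ℝ) * (1 / p))
              = (2 * (p : ℝ) - 1 - ∑ i', h (Sum.inl i')) / p := by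
            field_simp
            ring
          rw [heq, le_div_iff₀ hppos]
          have hp1r : (1 : ℝ) ≤ (p : ℝ) := by exact_mod_cast hp
          have hprod : 0 ≤ (1 - h (Sum.inr j)) * ((p : ℝ) - 1) :=
            mul_nonneg (by linarith) (by linarith)
          nlinarith [hprod]
        · intro i
          simp only [Sum.elim_inl]
          rw [Finset.sum_congr rfl fun j _ => hdot i j, Finset.sum_const,
            Finset.card_univ, Fintype.card_fin, nsmul_eq_mul]
          have : (1 : ℝ) - (p : ℝ) * (-(1 / (p : ℝ)) * h (Sum.inl i) + 1 / p)
              = h (Sum.inl i) := by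
            field_simp
            ring
          linarith [this.ge]
      · -- objective value
        simp only [Sum.elim_inr, Finset.sum_const, Finset.card_univ, Fintype.card_fin,
          nsmul_eq_mul]
        field_simp
    · -- lower bound
      rintro t ⟨x, hx, ⟨P, q, hnn, hcov⟩, rfl⟩
      by_cases hp2 : 2 ≤ p
      · exact lot_aff_lower hp2 x hx P q hnn hcov
      · have hp1 : p = 1 := by omega
        subst hp1
        simp only [Nat.cast_one, sub_self]
        exact Finset.sum_nonneg fun j _ => (hx _).1
end
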